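/- arXiv:1701.07791 — 12 statements merged into one kernel-verified Lean document; each statement's English description precedes it below -/
import Mathlib

section
/- If A ⊆ ℤ has positive upper Banach density, then A has the 1-sided sumset property: there exist injective sequences (b_i) and (c_j) of integers such that b_i + c_j ∈ A for all i ≤ j. -/
/-!
If `S` has upper Banach density at least `1/K`, slide a window of width `L = 2K` across a dense
stretch of `S`: on average it contains two points of `S`, and pigeonholing the gaps between
them gives a `u ∈ [1, L)` such that `S ∩ (S - u)` still has positive upper Banach density.
Iterating yields `A = S₀ ⊇ S₁ ⊇ ⋯` with `S_{n+1} = S_n ∩ (S_n - t_n)`, `t_n > 0`. With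
`b_k = t₀ + ⋯ + t_{k-1}`, every `x ∈ S_j` satisfies `x + b_i ∈ A` for `i ≤ j`, and since each
`S_j` is infinite we can pick distinct `c_j ∈ S_j`.
-/

open Filter Finset

lemma exists_injective_forall_mem_of_infinite {α : Type*} [Countable α] {S : ℕ → Set α}
    (hS : ∀ n, (S n).Infinite) : ∃ c : ℕ → α, Function.Injective c ∧ ∀ n, c n ∈ S n := by
  obtain ⟨f, hf⟩ := Countable.exists_injective_nat α
  have hfreq : ∀ n, ∃ᶠ k in atTop, ∃ x ∈ S n, f x = k := fun n =>
    Nat.frequently_atTop_iff_infinite.2 ((hS n).image hf.injOn)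
  obtain ⟨φ, hφ, hmem⟩ := extraction_forall_of_frequently hfreq
  choose c hcS hc using hmem
  exact ⟨c, fun i j h => hφ.injective (by rw [← hc i, ← hc j, h]), hcS⟩

section ShiftIteration

variable {G : Type*} [AddCommMonoid G]

lemma add_sum_range_mem_of_shift_inter {S : ℕ → Set G} {t : ℕ → G}
    (hS : ∀ n, S (n + 1) = S n ∩ {x | x + t n ∈ S n}) :
    ∀ n, ∀ x ∈ S n, ∀ k ≤ n, x + ∑ i ∈ range k, t i ∈ S 0 := by
  intro n
  induction n with
  | zero =>
    intro x hx k hk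
    obtain rfl : k = 0 := by omega
    simpa using hx
  | succ n ih =>
    intro x hx k hk
    rw [hS] at hx
    rcases hk.lt_or_eq with hk | rfl
    · exact ih x hx.1 k (by omega)
    · rw [sum_range_succ, add_comm (∑ i ∈ range n, t i), ← add_assoc]
      exact ih _ hx.2 n le_rfl

theorem exists_injective_add_mem_of_forall_exists_shift [PartialOrder G]
    [IsOrderedCancelAddMonoid G] [Countable G] {P : Set G → Prop}
    (hinf : ∀ S, P S → S.Infinite) (hshift : ∀ S, P S → ∃ u, 0 < u ∧ P (S ∩ {x | x + u ∈ S}))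
    {A : Set G} (hA : P A) :
    ∃ b c : ℕ → G, Function.Injective b ∧ Function.Injective c ∧
      ∀ i j : ℕ, i ≤ j → b i + c j ∈ A := by
  choose! u hu hPu using hshift
  let S : ℕ → Set G := fun n => Nat.rec A (fun _ T => T ∩ {x | x + u T ∈ T}) n
  have hPS : ∀ n, P (S n) := fun n => Nat.rec hA (fun _ ih => hPu _ ih) n
  obtain ⟨c, hc, hcS⟩ := exists_injective_forall_mem_of_infinite fun n => hinf _ (hPS n)
  refine ⟨fun k => ∑ i ∈ range k, u (S i), c, ?_, hc, fun i j hij => ?_⟩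
  · refine (strictMono_nat_of_lt_succ fun n => ?_).injective
    simpa [sum_range_succ] using hu _ (hPS n)
  · rw [add_comm]
    exact add_sum_range_mem_of_shift_inter (fun n => rfl) j (c j) (hcS j) i hij

end ShiftIteration

section SlidingWindow

lemma sum_card_filter_add_mem_eq_mul_card {F X : Finset ℤ} {L : ℕ}
    (hFX : ∀ y ∈ F, ∀ t < L, y - t ∈ X) :
    ∑ x ∈ X, #{t ∈ range L | x + ((t : ℕ) : ℤ) ∈ F} = L * #F := by
  have hshift : ∀ t ∈ range L, #{x ∈ X | x + (t : ℤ) ∈ F} = #F := fun t ht =>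
    card_nbij' (· + (t : ℤ)) (· - t) (fun x hx => by simp_all)
      (fun y hy => by simpa [hFX y hy t (mem_range.1 ht)] using hy) (fun x _ => by simp)
      (fun y _ => by simp)
  simp_rw [card_filter]
  rw [sum_comm]
  simp_rw [← card_filter]
  rw [sum_congr rfl hshift, sum_const, card_range, smul_eq_mul]

lemma sum_le_mul_card_filter_two_le_add_card {ι : Type*} (s : Finset ι) (f : ι → ℕ) {L : ℕ}
    (hf : ∀ i ∈ s, f i ≤ L) : ∑ i ∈ s, f i ≤ L * #{i ∈ s | 2 ≤ f i} + #s := by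
  rw [card_filter, mul_sum, card_eq_sum_ones, ← sum_add_distrib]
  refine sum_le_sum fun i hi => ?_
  have := hf i hi
  split_ifs <;> omega

lemma card_filter_two_le_le_mul_sum (F X : Finset ℤ) (L : ℕ) :
    #{x ∈ X | 2 ≤ #{t ∈ range L | x + ((t : ℕ) : ℤ) ∈ F}} ≤
      L * ∑ v ∈ Ico 1 L, #{y ∈ F | y + (v : ℤ) ∈ F} := by
  have hcover : {x ∈ X | 2 ≤ #{t ∈ range L | x + ((t : ℕ) : ℤ) ∈ F}} ⊆
      (range L ×ˢ Ico 1 L).biUnion fun p =>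
        {x ∈ X | x + (p.1 : ℤ) ∈ F ∧ x + (p.1 : ℤ) + (p.2 : ℤ) ∈ F} := by
    intro x hx
    rw [mem_filter] at hx
    obtain ⟨a, ha, b, hb, hab⟩ := one_lt_card.1 hx.2
    simp only [mem_filter, mem_range] at ha hb
    wlog hlt : a < b generalizing a b
    · exact this b a hab.symm hb ha (by omega)
    simp only [mem_biUnion, mem_product, mem_range, mem_Ico, mem_filter]
    refine ⟨(a, b - a), ⟨ha.1, by omega, by omega⟩, hx.1, ha.2, ?_⟩
    convert hb.2 using 1
    push_cast [hlt.le]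
    ring
  calc _ ≤ _ := card_le_card hcover
    _ ≤ _ := card_biUnion_le
    _ ≤ ∑ p ∈ range L ×ˢ Ico 1 L, #{y ∈ F | y + (p.2 : ℤ) ∈ F} := by
      refine sum_le_sum fun p _ => card_le_card_of_injOn (· + (p.1 : ℤ)) (fun x hx => ?_)
        (fun x _ y _ h => add_right_cancel h)
      simp only [coe_filter, Set.mem_ofPred_eq] at hx ⊢
      exact ⟨hx.2.1, hx.2.2⟩
    _ = _ := by simp only [sum_product, sum_const, card_range, smul_eq_mul]

lemma exists_mem_Ico_mul_card_le (F : Finset ℤ) (m : ℤ) (N L : ℕ) (hL : 2 ≤ L)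
    (hF : F ⊆ Icc m (m + N)) :
    ∃ u ∈ Ico 1 L, L * #F ≤ L ^ 3 * #{y ∈ F | y + (u : ℤ) ∈ F} + (N + L + 1) := by
  set X := Icc (m - L) (m + N)
  obtain ⟨u, hu, hmax⟩ :=
    (Ico 1 L).exists_max_image (fun v => #{y ∈ F | y + (v : ℤ) ∈ F}) (nonempty_Ico.2 (by omega))
  refine ⟨u, hu, ?_⟩
  have hFX : ∀ y ∈ F, ∀ t < L, y - t ∈ X := fun y hy t ht => by
    have := mem_Icc.1 (hF hy)
    simp only [X, mem_Icc]
    omega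
  have hX : #X = N + L + 1 := by simp only [X, Int.card_Icc]; omega
  have hgaps : ∑ v ∈ Ico 1 L, #{y ∈ F | y + (v : ℤ) ∈ F} ≤ L * #{y ∈ F | y + (u : ℤ) ∈ F} := by
    calc _ ≤ #(Ico 1 L) • #{y ∈ F | y + (u : ℤ) ∈ F} := sum_le_card_nsmul _ _ _ hmax
      _ ≤ _ := by rw [smul_eq_mul, Nat.card_Ico]; gcongr; omega
  calc L * #F = ∑ x ∈ X, #{t ∈ range L | x + ((t : ℕ) : ℤ) ∈ F} :=
        (sum_card_filter_add_mem_eq_mul_card hFX).symm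
    _ ≤ L * #{x ∈ X | 2 ≤ #{t ∈ range L | x + ((t : ℕ) : ℤ) ∈ F}} + #X :=
      sum_le_mul_card_filter_two_le_add_card _ _ fun x _ =>
        (card_filter_le _ _).trans (card_range L).le
    _ ≤ L * (L * (L * #{y ∈ F | y + (u : ℤ) ∈ F})) + #X := by
      gcongr
      exact (card_filter_two_le_le_mul_sum F X L).trans (Nat.mul_le_mul_left L hgaps)
    _ = _ := by rw [hX]; ring

end SlidingWindow

section Density

open Classical

/-- A lower bound `1 / K` on the upper Banach density of `S`. -/
def FrequentlyDense (K : ℕ) (S : Set ℤ) : Prop :=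
  ∃ᶠ N : ℕ in atTop, ∃ m : ℤ, N ≤ K * #{x ∈ Icc m (m + N) | x ∈ S}

lemma FrequentlyDense.infinite {K : ℕ} {S : Set ℤ} (h : FrequentlyDense K S) : S.Infinite := by
  intro hfin
  obtain ⟨N, hN, m, hm⟩ := frequently_atTop.1 h (K * #hfin.toFinset + 1)
  have : #{x ∈ Icc m (m + N) | x ∈ S} ≤ #hfin.toFinset :=
    card_le_card fun x hx => by simpa using (mem_filter.1 hx).2
  have := Nat.mul_le_mul_left K this
  omega

lemma FrequentlyDense.exists_shift {K : ℕ} {S : Set ℤ} (h : FrequentlyDense K S) :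
    ∃ u : ℤ, 0 < u ∧ FrequentlyDense (2 * (2 * K) ^ 3) (S ∩ {x | x + u ∈ S}) := by
  set L := 2 * K
  have hwin : ∃ᶠ N : ℕ in atTop, ∃ u ∈ Ico 1 L, ∃ m : ℤ,
      N ≤ 2 * L ^ 3 * #{x ∈ Icc m (m + N) | x ∈ S ∩ {x | x + (u : ℤ) ∈ S}} := by
    refine (h.and_eventually (eventually_ge_atTop (2 * L + 2))).mono ?_
    rintro N ⟨⟨m, hm⟩, hN⟩
    set F : Finset ℤ := {x ∈ Icc m (m + N) | x ∈ S}
    have hK : K ≠ 0 := by rintro rfl; omega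
    obtain ⟨u, hu, hcount⟩ := exists_mem_Ico_mul_card_le F m N L (by omega) (filter_subset _ _)
    refine ⟨u, hu, m, ?_⟩
    have hsub : #{y ∈ F | y + (u : ℤ) ∈ F} ≤
        #{x ∈ Icc m (m + N) | x ∈ S ∩ {x | x + (u : ℤ) ∈ S}} :=
      card_le_card fun x hx => by simp_all [F]
    have h2N : 2 * N ≤ L * #F := by rw [mul_assoc]; omega
    have := Nat.mul_le_mul_left (L ^ 3) hsub
    rw [mul_assoc]
    omega
  obtain ⟨u, hu, hfreq⟩ := (Ico 1 L).frequently_exists.1 hwin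
  refine ⟨u, by have := (mem_Ico.1 hu).1; omega, ?_⟩
  unfold FrequentlyDense
  -- the two sides differ only in the `Decidable` instance of the filter predicate
  convert hfreq

lemma exists_frequentlyDense_of_tendsto {A : Set ℤ} {d : ℝ} (hd : 0 < d)
    (hBD : Tendsto (fun n : ℕ => ⨆ m : ℤ, ((A ∩ Set.Icc (m + 1) (m + n)).ncard : ℝ) / n)
      atTop (nhds d)) :
    ∃ K, FrequentlyDense K A := by
  obtain ⟨K, hK⟩ := exists_nat_one_div_lt hd
  refine ⟨K + 1,
    ((hBD.eventually (lt_mem_nhds hK)).and (eventually_ge_atTop 1)).frequently.mono ?_⟩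
  rintro n ⟨hlt, hn⟩
  obtain ⟨m, hm⟩ := exists_lt_of_lt_ciSup hlt
  refine ⟨m + 1, ?_⟩
  have hle : (A ∩ Set.Icc (m + 1) (m + n)).ncard ≤ #{x ∈ Icc (m + 1) (m + 1 + n) | x ∈ A} := by
    rw [← Set.ncard_coe_finset]
    refine Set.ncard_le_ncard (fun x hx => ?_) (finite_toSet _)
    simp only [Set.mem_inter_iff, Set.mem_Icc, coe_filter, mem_Icc] at hx ⊢
    exact ⟨⟨hx.2.1, by omega⟩, hx.1⟩
  rw [div_lt_div_iff₀ (by positivity) (by exact_mod_cast hn)] at hm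
  have : (n : ℝ) < (K + 1) * #{x ∈ Icc (m + 1) (m + 1 + n) | x ∈ A} := by
    have hle' : ((A ∩ Set.Icc (m + 1) (m + n)).ncard : ℝ) ≤ _ := Nat.cast_le.2 hle
    nlinarith
  exact_mod_cast this.le

end Density

/-- If `A ⊆ ℤ` has positive upper Banach density (the limit as `n → ∞` of
`sup_m |A ∩ [m+1, m+n]| / n` exists and is positive), then `A` has the 1-sided
sumset property: there are injective sequences `(bᵢ)` and `(cⱼ)` with
`bᵢ + cⱼ ∈ A` for all `i ≤ j`. -/
theorem stmt0 (A : Set ℤ) (d : ℝ) (hd : 0 < d)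
    (hBD : Filter.Tendsto
      (fun n : ℕ => ⨆ m : ℤ, ((A ∩ Set.Icc (m + 1) (m + n)).ncard : ℝ) / n)
      Filter.atTop (nhds d)) :
    ∃ b c : ℕ → ℤ, Function.Injective b ∧ Function.Injective c ∧
      ∀ i j : ℕ, i ≤ j → b i + c j ∈ A := by
  obtain ⟨K, hK⟩ := exists_frequentlyDense_of_tendsto hd hBD
  refine exists_injective_add_mem_of_forall_exists_shift (P := fun S => ∃ K, FrequentlyDense K S)
    (fun _ ⟨_, hS⟩ => hS.infinite) (fun _ ⟨_, hS⟩ => ?_) ⟨K, hK⟩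
  obtain ⟨u, hu, hS'⟩ := hS.exists_shift
  exact ⟨u, hu, _, hS'⟩
end

section
/- Let G be a group and A ⊆ G. Suppose the relation R(b,c) := (b·c ∈ A) is stable on G, i.e., there is no k such that there exist b_1,…,b_k, c_1,…,c_k ∈ G with b_i·c_j ∈ A iff i ≤ j, for all k (no order property of unbounded length). If A has the 1-sided productset property, then A has the productset property: there exist infinite sets B, C ⊆ G with B·C ⊆ A. -/
/-!
Color a pair `i < j` by whether `b j * c i ∈ A`; the 1-sided hypothesis already puts every
`b i * c j` with `i ≤ j` in `A`. By Ramsey's theorem some infinite subsequence is monochromatic.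
If all of its pairs lie in `A`, the subsequence gives the productset. If none does, it exhibits
the order property of every length, contradicting stability.
-/

open Filter

theorem exists_strictMono_forall_lt_of_eventually_eventually {α : Type*} [Preorder α]
    [NoMaxOrder α] {l : Filter α} [l.NeBot] (hl : l ≤ atTop) {Q : α → α → Prop}
    (hQ : ∀ᶠ i in l, ∀ᶠ j in l, Q i j) :
    ∃ a : ℕ → α, StrictMono a ∧ ∀ m n, m < n → Q (a m) (a n) := by
  obtain ⟨a, -, ha⟩ := exists_seq_of_forall_finset_exists (fun i => ∀ᶠ j in l, Q i j)
    (fun i j => i < j ∧ Q i j) fun s hs => by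
      have hgt : ∀ᶠ j in l, ∀ i ∈ s, i < j :=
        (s.eventually_all).2 fun i _ => hl (eventually_gt_atTop i)
      have hQs : ∀ᶠ j in l, ∀ i ∈ s, Q i j := (s.eventually_all).2 hs
      obtain ⟨j, hj, hjgt, hjQ⟩ := (hQ.and (hgt.and hQs)).exists
      exact ⟨j, hj, fun i hi => ⟨hjgt i hi, hjQ i hi⟩⟩
  exact ⟨a, strictMono_nat_of_lt_succ fun n => (ha n (n + 1) n.lt_succ_self).1,
    fun m n hmn => (ha m n hmn).2⟩

/-- Infinite Ramsey theorem for 2-colorings of pairs. -/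
theorem exists_strictMono_forall_lt_or_forall_lt_not (P : ℕ → ℕ → Prop) :
    ∃ a : ℕ → ℕ, StrictMono a ∧
      ((∀ m n, m < n → P (a m) (a n)) ∨ ∀ m n, m < n → ¬ P (a m) (a n)) := by
  have hU : (hyperfilter ℕ : Filter ℕ) ≤ atTop :=
    Nat.cofinite_eq_atTop ▸ hyperfilter_le_cofinite
  -- The ultrafilter colors each `i` by the color of almost all pairs `(i, j)`.
  rcases (hyperfilter ℕ).eventually_or.1
      (Eventually.of_forall fun i => em (∀ᶠ j in hyperfilter ℕ, P i j)) with hP | hnP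
  · obtain ⟨a, ha, hPa⟩ := exists_strictMono_forall_lt_of_eventually_eventually hU hP
    exact ⟨a, ha, .inl hPa⟩
  · obtain ⟨a, ha, hPa⟩ := exists_strictMono_forall_lt_of_eventually_eventually hU
      (hnP.mono fun i hi => Ultrafilter.eventually_not.2 hi)
    exact ⟨a, ha, .inr hPa⟩

/-- If `A ⊆ G` is stable (the relation `x · y ∈ A` has no order configurations of
unbounded length) and `A` has the 1-sided productset property, then `A` has the
productset property. -/
theorem stmt1 {G : Type*} [Group G] (A : Set G)
    (hstable : ∃ k : ℕ, ¬ ∃ b c : Fin k → G, ∀ i j : Fin k, b i * c j ∈ A ↔ i ≤ j)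
    (h1side : ∃ b c : ℕ → G, Function.Injective b ∧ Function.Injective c ∧
      ∀ i j : ℕ, i ≤ j → b i * c j ∈ A) :
    ∃ B C : Set G, B.Infinite ∧ C.Infinite ∧ ∀ b ∈ B, ∀ c ∈ C, b * c ∈ A := by
  obtain ⟨b, c, hb, hc, hbc⟩ := h1side
  obtain ⟨a, ha, hall | hnone⟩ := exists_strictMono_forall_lt_or_forall_lt_not
    fun i j => b j * c i ∈ A
  · refine ⟨Set.range (b ∘ a), Set.range (c ∘ a),
      Set.infinite_range_of_injective (hb.comp ha.injective),
      Set.infinite_range_of_injective (hc.comp ha.injective), ?_⟩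
    rintro _ ⟨m, rfl⟩ _ ⟨n, rfl⟩
    rcases le_or_gt m n with hmn | hnm
    · exact hbc _ _ (ha.monotone hmn)
    · exact hall n m hnm
  · obtain ⟨k, hk⟩ := hstable
    refine (hk ⟨fun i => b (a i), fun j => c (a j),
      fun i j => ⟨fun hij => ?_, fun hij => ?_⟩⟩).elim
    · exact not_lt.1 fun hji => hnone j i hji hij
    · exact hbc _ _ (ha.monotone hij)
end

section
/- Let A ⊆ ℤ. If there exist infinite sets B, C ⊆ ℤ with B + C ⊆ A, then there exist nonprincipal ultrafilters 𝒰 and 𝒱 on ℤ such that A ∈ 𝒰 ⊕ 𝒱 and A ∈ 𝒱 ⊕ 𝒰. -/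
/-- If `B + C ⊆ A` for infinite `B, C ⊆ ℤ`, then there are nonprincipal
ultrafilters `𝒰, 𝒱` on `ℤ` with `A ∈ 𝒰 ⊕ 𝒱` and `A ∈ 𝒱 ⊕ 𝒰`, where
`A ∈ 𝒰 ⊕ 𝒱` means `{k : A − k ∈ 𝒱} ∈ 𝒰`. -/
theorem stmt2 (A B C : Set ℤ) (hB : B.Infinite) (hC : C.Infinite)
    (hBC : ∀ b ∈ B, ∀ c ∈ C, b + c ∈ A) :
    ∃ 𝒰 𝒱 : Ultrafilter ℤ,
      (∀ S : Set ℤ, S.Finite → S ∉ 𝒰) ∧ (∀ S : Set ℤ, S.Finite → S ∉ 𝒱) ∧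
      {k : ℤ | {x : ℤ | x + k ∈ A} ∈ 𝒱} ∈ 𝒰 ∧
      {k : ℤ | {x : ℤ | x + k ∈ A} ∈ 𝒰} ∈ 𝒱 := by
  haveI : (Filter.cofinite ⊓ Filter.principal B).NeBot :=
    hB.cofinite_inf_principal_neBot
  haveI : (Filter.cofinite ⊓ Filter.principal C).NeBot :=
    hC.cofinite_inf_principal_neBot
  set 𝒰 := Ultrafilter.of (Filter.cofinite ⊓ Filter.principal B) with h𝒰
  set 𝒱 := Ultrafilter.of (Filter.cofinite ⊓ Filter.principal C) with h𝒱
  have hU : ↑𝒰 ≤ Filter.cofinite ⊓ Filter.principal B := Ultrafilter.of_le _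
  have hV : ↑𝒱 ≤ Filter.cofinite ⊓ Filter.principal C := Ultrafilter.of_le _
  have hUB : B ∈ 𝒰 := hU (Filter.mem_inf_of_right (Filter.mem_principal_self B))
  have hVC : C ∈ 𝒱 := hV (Filter.mem_inf_of_right (Filter.mem_principal_self C))
  have hUcof : ∀ S : Set ℤ, S.Finite → S ∉ 𝒰 := by
    intro S hS hmem
    have : Sᶜ ∈ 𝒰 := hU (Filter.mem_inf_of_left hS.compl_mem_cofinite)
    exact absurd (𝒰.toFilter.inter_mem hmem this) (by simp)
  have hVcof : ∀ S : Set ℤ, S.Finite → S ∉ 𝒱 := by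
    intro S hS hmem
    have : Sᶜ ∈ 𝒱 := hV (Filter.mem_inf_of_left hS.compl_mem_cofinite)
    exact absurd (𝒱.toFilter.inter_mem hmem this) (by simp)
  refine ⟨𝒰, 𝒱, hUcof, hVcof, ?_, ?_⟩
  · exact 𝒰.toFilter.mem_of_superset hUB fun k hk =>
      𝒱.toFilter.mem_of_superset hVC fun x hx => by
        simpa [add_comm] using hBC k hk x hx
  · exact 𝒱.toFilter.mem_of_superset hVC fun k hk =>
      𝒰.toFilter.mem_of_superset hUB fun x hx => hBC x hx k hk
end

section
/- Let A ⊆ ℤ. If there exist nonprincipal ultrafilters 𝒰 and 𝒱 on ℤ with A ∈ 𝒰 ⊕ 𝒱 and A ∈ 𝒱 ⊕ 𝒰, then there exist infinite sets B, C ⊆ ℤ with B + C ⊆ A. -/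
/-- If there are nonprincipal ultrafilters `𝒰, 𝒱` on `ℤ` with `A ∈ 𝒰 ⊕ 𝒱` and
`A ∈ 𝒱 ⊕ 𝒰` (where `A ∈ 𝒰 ⊕ 𝒱` means `{k : A − k ∈ 𝒱} ∈ 𝒰`), then there are
infinite `B, C ⊆ ℤ` with `B + C ⊆ A`. -/
theorem stmt3 (A : Set ℤ) (𝒰 𝒱 : Ultrafilter ℤ)
    (h𝒰 : ∀ S : Set ℤ, S.Finite → S ∉ 𝒰) (h𝒱 : ∀ S : Set ℤ, S.Finite → S ∉ 𝒱)
    (hUV : {k : ℤ | {x : ℤ | x + k ∈ A} ∈ 𝒱} ∈ 𝒰)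
    (hVU : {k : ℤ | {x : ℤ | x + k ∈ A} ∈ 𝒰} ∈ 𝒱) :
    ∃ B C : Set ℤ, B.Infinite ∧ C.Infinite ∧ ∀ b ∈ B, ∀ c ∈ C, b + c ∈ A := by
  classical
  set SU : Set ℤ := {k : ℤ | {x : ℤ | x + k ∈ A} ∈ 𝒱} with hSUdef
  set SV : Set ℤ := {k : ℤ | {x : ℤ | x + k ∈ A} ∈ 𝒰} with hSVdef
  -- from any ultrafilter set we can pick an element avoiding a finite list
  have key : ∀ (W : Ultrafilter ℤ), (∀ S : Set ℤ, S.Finite → S ∉ W) →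
      ∀ T : Set ℤ, T ∈ W → ∀ l : List ℤ, ∃ x, x ∈ T ∧ x ∉ l := by
    intro W hW T hT l
    have hTinf : T.Infinite := fun hfin => hW T hfin hT
    obtain ⟨x, hx⟩ := (hTinf.diff l.finite_toSet).nonempty
    exact ⟨x, hx.1, fun h => hx.2 h⟩
  -- the invariant on pairs of accumulated lists
  let Inv : List ℤ × List ℤ → Prop := fun p =>
    p.1.Nodup ∧ p.2.Nodup ∧ (∀ b ∈ p.1, b ∈ SU) ∧ (∀ c ∈ p.2, c ∈ SV) ∧
    ∀ b ∈ p.1, ∀ c ∈ p.2, b + c ∈ A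
  have step : ∀ p : List ℤ × List ℤ, Inv p → ∃ q : List ℤ × List ℤ,
      Inv q ∧ (∃ b, q.1 = b :: p.1) ∧ (∃ c, q.2 = c :: p.2) := by
    rintro ⟨bs, cs⟩ ⟨h1, h2, h3, h4, h5⟩
    have hTB : (SU ∩ ⋂ c ∈ {c | c ∈ cs}, {x : ℤ | x + c ∈ A}) ∈ 𝒰 := by
      refine Filter.inter_mem hUV ?_
      refine (Filter.biInter_mem cs.finite_toSet).2 ?_
      intro c hc
      exact h4 c hc
    obtain ⟨b, hbT, hbnew⟩ := key 𝒰 h𝒰 _ hTB bs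
    have hbSU : b ∈ SU := hbT.1
    have hbsum : ∀ c ∈ cs, b + c ∈ A := by
      intro c hc
      have := Set.mem_iInter₂.1 hbT.2 c hc
      exact this
    have hTC : (SV ∩ ⋂ b' ∈ {b' | b' ∈ b :: bs}, {x : ℤ | b' + x ∈ A}) ∈ 𝒱 := by
      refine Filter.inter_mem hVU ?_
      refine (Filter.biInter_mem (b :: bs).finite_toSet).2 ?_
      intro b' hb'
      have hb'SU : b' ∈ SU := by
        rcases List.mem_cons.1 hb' with h | h
        · exact h ▸ hbSU
        · exact h3 b' h
      have hmem : {x : ℤ | x + b' ∈ A} ∈ 𝒱 := hb'SU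
      have heq : {x : ℤ | b' + x ∈ A} = {x : ℤ | x + b' ∈ A} := by
        ext x; simp [add_comm]
      rw [heq]
      exact hmem
    obtain ⟨c, hcT, hcnew⟩ := key 𝒱 h𝒱 _ hTC cs
    have hcSV : c ∈ SV := hcT.1
    have hcsum : ∀ b' ∈ b :: bs, b' + c ∈ A := by
      intro b' hb'
      exact Set.mem_iInter₂.1 hcT.2 b' hb'
    refine ⟨(b :: bs, c :: cs), ⟨?_, ?_, ?_, ?_, ?_⟩, ⟨b, rfl⟩, ⟨c, rfl⟩⟩
    · exact List.nodup_cons.2 ⟨hbnew, h1⟩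
    · exact List.nodup_cons.2 ⟨hcnew, h2⟩
    · intro b' hb'
      rcases List.mem_cons.1 hb' with h | h
      · exact h ▸ hbSU
      · exact h3 b' h
    · intro c' hc'
      rcases List.mem_cons.1 hc' with h | h
      · exact h ▸ hcSV
      · exact h4 c' h
    · intro b' hb' c' hc'
      rcases List.mem_cons.1 hc' with h | h
      · exact h ▸ hcsum b' hb'
      · rcases List.mem_cons.1 hb' with h' | h'
        · exact h' ▸ hbsum c' h
        · exact h5 b' h' c' h
  choose stepf hstep using step
  have inv0 : Inv (([] : List ℤ), ([] : List ℤ)) := by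
    refine ⟨List.nodup_nil, List.nodup_nil, ?_, ?_, ?_⟩ <;> simp
  let F : ℕ → {p : List ℤ × List ℤ // Inv p} := fun n =>
    Nat.rec ⟨(([] : List ℤ), ([] : List ℤ)), inv0⟩
      (fun _ ih => ⟨stepf ih.1 ih.2, (hstep ih.1 ih.2).1⟩) n
  have hFs : ∀ n, (∃ b, (F (n+1)).1.1 = b :: (F n).1.1) ∧
      (∃ c, (F (n+1)).1.2 = c :: (F n).1.2) := by
    intro n
    exact ⟨(hstep (F n).1 (F n).2).2.1, (hstep (F n).1 (F n).2).2.2⟩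
  have hlen : ∀ n, (F n).1.1.length = n ∧ (F n).1.2.length = n := by
    intro n
    induction n with
    | zero => exact ⟨rfl, rfl⟩
    | succ n ih =>
      obtain ⟨⟨b, hb⟩, ⟨c, hc⟩⟩ := hFs n
      constructor
      · rw [hb, List.length_cons, ih.1]
      · rw [hc, List.length_cons, ih.2]
  have mono1 : ∀ m n, m ≤ n → ∀ x ∈ (F m).1.1, x ∈ (F n).1.1 := by
    intro m n hmn
    induction n, hmn using Nat.le_induction with
    | base => exact fun x hx => hx
    | succ n hn ih =>
      obtain ⟨b, hb⟩ := (hFs n).1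
      intro x hx
      rw [hb]
      exact List.mem_cons_of_mem _ (ih x hx)
  have mono2 : ∀ m n, m ≤ n → ∀ x ∈ (F m).1.2, x ∈ (F n).1.2 := by
    intro m n hmn
    induction n, hmn using Nat.le_induction with
    | base => exact fun x hx => hx
    | succ n hn ih =>
      obtain ⟨c, hc⟩ := (hFs n).2
      intro x hx
      rw [hc]
      exact List.mem_cons_of_mem _ (ih x hx)
  refine ⟨{z | ∃ n, z ∈ (F n).1.1}, {z | ∃ n, z ∈ (F n).1.2}, ?_, ?_, ?_⟩
  · intro hfin
    set m := hfin.toFinset.card with hm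
    have hsub : ((F (m+1)).1.1).toFinset ⊆ hfin.toFinset := by
      intro x hx
      rw [Set.Finite.mem_toFinset]
      exact ⟨m+1, List.mem_toFinset.1 hx⟩
    have hcard := Finset.card_le_card hsub
    rw [List.toFinset_card_of_nodup (F (m+1)).2.1, (hlen (m+1)).1] at hcard
    omega
  · intro hfin
    set m := hfin.toFinset.card with hm
    have hsub : ((F (m+1)).1.2).toFinset ⊆ hfin.toFinset := by
      intro x hx
      rw [Set.Finite.mem_toFinset]
      exact ⟨m+1, List.mem_toFinset.1 hx⟩
    have hcard := Finset.card_le_card hsub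
    rw [List.toFinset_card_of_nodup (F (m+1)).2.2.1, (hlen (m+1)).2] at hcard
    omega
  · rintro b ⟨n, hb⟩ c ⟨m, hc⟩
    have hb' := mono1 n (max n m) (le_max_left n m) b hb
    have hc' := mono2 m (max n m) (le_max_right n m) c hc
    exact (F (max n m)).2.2.2.2.2 b hb' c hc'
end

section
/- Let G be an abelian group and A ⊆ G. Then A contains a sumset B + C with B, C ⊆ G infinite if and only if there exist nonprincipal ultrafilters 𝒰, 𝒱 on G such that A ∈ 𝒰 ⊕ 𝒱 and A ∈ 𝒱 ⊕ 𝒰. -/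
/-!
Given nonprincipal ultrafilters with `A ∈ 𝒰 ⊕ 𝒱` and `A ∈ 𝒱 ⊕ 𝒰`, call `b` good if `A − b ∈ 𝒱`
and `c` good if `A − c ∈ 𝒰`; good `b` form a set in `𝒰` and good `c` a set in `𝒱`. Build
`b₀, c₀, b₁, c₁, …` greedily: a new good `b` must avoid the earlier `bᵢ` and lie in every
`A − cᵢ`, finitely many conditions each holding on a set in `𝒰`; a new good `c` must likewise
avoid the earlier `cᵢ` and lie in every `A − bᵢ`, including the `b` just chosen. Conversely,
nonprincipal ultrafilters containing infinite `B` and `C` with `B + C ⊆ A` witness the condition.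
-/

open Filter Set

theorem Ultrafilter.le_cofinite_iff_forall_finite_notMem {α : Type*} (𝒰 : Ultrafilter α) :
    (𝒰 : Filter α) ≤ cofinite ↔ ∀ s : Set α, s.Finite → s ∉ 𝒰 := by
  refine ⟨fun h s hs => compl_mem_iff_notMem.1 (h hs.compl_mem_cofinite), fun h s hs => ?_⟩
  rw [← compl_compl s]
  exact compl_mem_iff_notMem.2 (h _ (mem_cofinite.1 hs))

theorem Set.Infinite.exists_ultrafilter_le_cofinite {α : Type*} {s : Set α} (hs : s.Infinite) :
    ∃ 𝒰 : Ultrafilter α, (𝒰 : Filter α) ≤ cofinite ∧ s ∈ 𝒰 := by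
  have := hs.cofinite_inf_principal_neBot
  obtain ⟨𝒰, h𝒰⟩ := Ultrafilter.exists_le (cofinite ⊓ 𝓟 s)
  exact ⟨𝒰, h𝒰.trans inf_le_left, h𝒰 (mem_inf_of_right (mem_principal_self s))⟩

section Rectangle

variable {α β : Type*} {R : α → β → Prop}

theorem exists_infinite_rectangle_of_eventually_eventually {f : Filter α} {g : Filter β}
    [f.NeBot] [g.NeBot] (hf : f ≤ cofinite) (hg : g ≤ cofinite)
    (hfg : ∀ᶠ a in f, ∀ᶠ b in g, R a b) (hgf : ∀ᶠ b in g, ∀ᶠ a in f, R a b) :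
    ∃ (B : Set α) (C : Set β), B.Infinite ∧ C.Infinite ∧ ∀ a ∈ B, ∀ b ∈ C, R a b := by
  let P : α × β → Prop := fun p => (∀ᶠ b in g, R p.1 b) ∧ (∀ᶠ a in f, R a p.2) ∧ R p.1 p.2
  let r : α × β → α × β → Prop := fun p q => p.1 ≠ q.1 ∧ p.2 ≠ q.2 ∧ R p.1 q.2 ∧ R q.1 p.2
  have step (s : Finset (α × β)) (hs : ∀ p ∈ s, P p) : ∃ q, P q ∧ ∀ p ∈ s, r p q := by
    have ha : ∀ᶠ a in f, (∀ᶠ b in g, R a b) ∧ (∀ p ∈ s, p.1 ≠ a) ∧ ∀ p ∈ s, R a p.2 := by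
      filter_upwards [hfg, (eventually_all_finset s).2 fun p _ => hf (eventually_cofinite_ne p.1),
        (eventually_all_finset s).2 fun p hp => (hs p hp).2.1] with a h₁ h₂ h₃
      exact ⟨h₁, fun p hp => (h₂ p hp).symm, h₃⟩
    obtain ⟨a, ha_good, ha_ne, ha_R⟩ := ha.exists
    have hb : ∀ᶠ b in g, (∀ᶠ a in f, R a b) ∧ R a b ∧ (∀ p ∈ s, p.2 ≠ b) ∧ ∀ p ∈ s, R p.1 b := by
      filter_upwards [hgf, ha_good,
        (eventually_all_finset s).2 fun p _ => hg (eventually_cofinite_ne p.2),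
        (eventually_all_finset s).2 fun p hp => (hs p hp).1] with b h₁ h₂ h₃ h₄
      exact ⟨h₁, h₂, fun p hp => (h₃ p hp).symm, h₄⟩
    obtain ⟨b, hb_good, hab, hb_ne, hb_R⟩ := hb.exists
    exact ⟨(a, b), ⟨ha_good, hb_good, hab⟩,
      fun p hp => ⟨ha_ne p hp, hb_ne p hp, hb_R p hp, ha_R p hp⟩⟩
  obtain ⟨u, hP, hr⟩ := exists_seq_of_forall_finset_exists P r step
  have hR (m n : ℕ) : R (u m).1 (u n).2 := by
    rcases lt_trichotomy m n with h | rfl | h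
    · exact (hr m n h).2.2.1
    · exact (hP m).2.2
    · exact (hr n m h).2.2.2
  refine ⟨range fun n => (u n).1, range fun n => (u n).2,
    infinite_range_of_injective (Function.Injective.of_lt_imp_ne fun m n h => (hr m n h).1),
    infinite_range_of_injective (Function.Injective.of_lt_imp_ne fun m n h => (hr m n h).2.1), ?_⟩
  rintro _ ⟨m, rfl⟩ _ ⟨n, rfl⟩
  exact hR m n

theorem exists_infinite_rectangle_iff_exists_ultrafilter :
    (∃ (B : Set α) (C : Set β), B.Infinite ∧ C.Infinite ∧ ∀ a ∈ B, ∀ b ∈ C, R a b) ↔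
      ∃ (𝒰 : Ultrafilter α) (𝒱 : Ultrafilter β), (𝒰 : Filter α) ≤ cofinite ∧
        (𝒱 : Filter β) ≤ cofinite ∧ (∀ᶠ a in 𝒰, ∀ᶠ b in 𝒱, R a b) ∧
        ∀ᶠ b in 𝒱, ∀ᶠ a in 𝒰, R a b := by
  constructor
  · rintro ⟨B, C, hB, hC, hR⟩
    obtain ⟨𝒰, h𝒰, hB𝒰⟩ := hB.exists_ultrafilter_le_cofinite
    obtain ⟨𝒱, h𝒱, hC𝒱⟩ := hC.exists_ultrafilter_le_cofinite
    exact ⟨𝒰, 𝒱, h𝒰, h𝒱, mem_of_superset hB𝒰 fun a ha => mem_of_superset hC𝒱 (hR a ha),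
      mem_of_superset hC𝒱 fun b hb => mem_of_superset hB𝒰 fun a ha => hR a ha b hb⟩
  · rintro ⟨𝒰, 𝒱, h𝒰, h𝒱, h𝒰𝒱, h𝒱𝒰⟩
    exact exists_infinite_rectangle_of_eventually_eventually h𝒰 h𝒱 h𝒰𝒱 h𝒱𝒰

end Rectangle

/-- In an abelian group `G`, a set `A` contains a sumset `B + C` of two infinite
sets if and only if there are nonprincipal ultrafilters `𝒰, 𝒱` on `G` with
`A ∈ 𝒰 ⊕ 𝒱` and `A ∈ 𝒱 ⊕ 𝒰`, where `A ∈ 𝒰 ⊕ 𝒱` means `{g : A − g ∈ 𝒱} ∈ 𝒰`. -/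
theorem stmt4 {G : Type*} [AddCommGroup G] (A : Set G) :
    (∃ B C : Set G, B.Infinite ∧ C.Infinite ∧ ∀ b ∈ B, ∀ c ∈ C, b + c ∈ A) ↔
    ∃ 𝒰 𝒱 : Ultrafilter G,
      (∀ S : Set G, S.Finite → S ∉ 𝒰) ∧ (∀ S : Set G, S.Finite → S ∉ 𝒱) ∧
      {g : G | {x : G | x + g ∈ A} ∈ 𝒱} ∈ 𝒰 ∧
      {g : G | {x : G | x + g ∈ A} ∈ 𝒰} ∈ 𝒱 := by
  simp only [← Ultrafilter.le_cofinite_iff_forall_finite_notMem]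
  refine exists_infinite_rectangle_iff_exists_ultrafilter.trans <|
    exists₂_congr fun 𝒰 𝒱 => and_congr_right' <| and_congr_right' <| and_congr_left' ?_
  simp only [add_comm]
  rfl
end

section
/- Let G be an infinite group and A ⊆ G. The following are equivalent: (i) A is syndetic (finitely many left translates of A cover G); (ii) for every ultrafilter 𝒱 on G, the set {g ∈ G : g⁻¹·A ∈ 𝒱} is nonempty; (iii) for every ultrafilter 𝒱 on G, the set {g ∈ G : g⁻¹·A ∈ 𝒱} is infinite. -/
open scoped Pointwise

private lemma smul_eq_set {G : Type*} [Group G] (A : Set G) (g : G) :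
    g • A = {x : G | g⁻¹ * x ∈ A} := by
  ext x
  simp [Set.mem_smul_set_iff_inv_smul_mem, smul_eq_mul]

/-- For `A` a subset of an infinite group `G`, the following are equivalent:
(i) `A` is syndetic; (ii) for every ultrafilter `𝒱` on `G` the set
`{g : g⁻¹·A ∈ 𝒱}` is nonempty; (iii) for every ultrafilter `𝒱` on `G` the set
`{g : g⁻¹·A ∈ 𝒱}` is infinite. -/
theorem stmt10 {G : Type*} [Group G] [Infinite G] (A : Set G) :
    ((∃ s : Finset G, (⋃ g ∈ s, g • A) = Set.univ) ↔
      (∀ 𝒱 : Ultrafilter G, ({g : G | {x : G | g * x ∈ A} ∈ 𝒱}).Nonempty)) ∧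
    ((∃ s : Finset G, (⋃ g ∈ s, g • A) = Set.univ) ↔
      (∀ 𝒱 : Ultrafilter G, ({g : G | {x : G | g * x ∈ A} ∈ 𝒱}).Infinite)) := by
  -- (i) → (iii)
  have hSynInf : (∃ s : Finset G, (⋃ g ∈ s, g • A) = Set.univ) →
      ∀ 𝒱 : Ultrafilter G, ({g : G | {x : G | g * x ∈ A} ∈ 𝒱}).Infinite := by
    rintro ⟨s, hs⟩ 𝒱
    set S : Set G := {g : G | {x : G | g * x ∈ A} ∈ 𝒱} with hS
    -- for every ultrafilter 𝒲 there is g ∈ s with g • A ∈ 𝒲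
    have key : ∀ 𝒲 : Ultrafilter G, ∃ g ∈ s, {x : G | g⁻¹ * x ∈ A} ∈ 𝒲 := by
      intro 𝒲
      have huniv : (⋃ g ∈ (s : Set G), g • A) ∈ 𝒲 := by
        rw [show (⋃ g ∈ (s : Set G), g • A) = ⋃ g ∈ s, g • A by simp, hs]
        exact Filter.univ_mem
      rw [Ultrafilter.finite_biUnion_mem_iff s.finite_toSet] at huniv
      obtain ⟨g, hg, hgA⟩ := huniv
      exact ⟨g, hg, by rwa [smul_eq_set] at hgA⟩
    -- S is syndetic: G = ⋃ g ∈ s, g • S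
    have cover : ∀ h : G, ∃ g ∈ s, g⁻¹ * h ∈ S := by
      intro h
      obtain ⟨g, hg, hmem⟩ := key (Ultrafilter.map (fun x => h * x) 𝒱)
      refine ⟨g, hg, ?_⟩
      have : {x : G | g⁻¹ * (h * x) ∈ A} ∈ 𝒱 := hmem
      simpa [hS, Set.mem_setOf_eq, mul_assoc] using this
    by_contra hfin
    rw [Set.not_infinite] at hfin
    have : (Set.univ : Set G).Finite := by
      have hsub : (Set.univ : Set G) ⊆ ⋃ g ∈ (s : Set G), g • S := by
        intro h _
        obtain ⟨g, hg, hgh⟩ := cover h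
        refine Set.mem_biUnion hg ?_
        rw [smul_eq_set]; exact hgh
      exact Set.Finite.subset (Set.Finite.biUnion s.finite_toSet
        (fun g _ => hfin.smul_set)) hsub
    exact Set.infinite_univ this
  -- (ii) → (i)
  have hNonSyn : (∀ 𝒱 : Ultrafilter G, ({g : G | {x : G | g * x ∈ A} ∈ 𝒱}).Nonempty) →
      ∃ s : Finset G, (⋃ g ∈ s, g • A) = Set.univ := by
    intro hN
    by_contra hns
    push_neg at hns
    set C : Set (Set G) := Set.range (fun g : G => {x : G | g * x ∈ A}ᶜ) with hC
    have hgen : (Filter.generate C).NeBot := by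
      rw [Filter.generate_neBot_iff]
      intro t ht htfin
      -- t ⊆ C, finite; choose a finite set of g's
      have : ∀ B ∈ t, ∃ g : G, B = {x : G | g * x ∈ A}ᶜ := by
        intro B hB
        obtain ⟨g, hg⟩ := ht hB
        exact ⟨g, hg.symm⟩
      choose f hf using this
      -- the finite set of group elements
      classical
      obtain ⟨t', rfl⟩ := Set.Finite.exists_finset_coe htfin
      set s : Finset G := t'.attach.image (fun B => (f B.1 B.2)⁻¹) with hs
      have hne := hns s
      have : (⋃ g ∈ s, g • A) ≠ Set.univ := hne
      rw [Set.ne_univ_iff_exists_notMem] at this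
      obtain ⟨x, hx⟩ := this
      refine ⟨x, ?_⟩
      rw [Set.mem_sInter]
      intro B hB
      rw [hf B hB]
      intro hxA
      apply hx
      have hmem : (f B hB)⁻¹ ∈ s := Finset.mem_image.2 ⟨⟨B, hB⟩, Finset.mem_attach _ _, rfl⟩
      exact Set.mem_biUnion hmem (by rw [smul_eq_set]; simpa using hxA)
    obtain ⟨𝒱, h𝒱⟩ := Ultrafilter.exists_le (Filter.generate C)
    obtain ⟨g, hg⟩ := hN 𝒱
    have hcompl : {x : G | g * x ∈ A}ᶜ ∈ 𝒱 :=
      h𝒱 (Filter.mem_generate_of_mem ⟨g, rfl⟩)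
    exact (Ultrafilter.compl_mem_iff_notMem.1 hcompl) hg
  constructor
  · exact ⟨fun h 𝒱 => (hSynInf h 𝒱).nonempty, hNonSyn⟩
  · exact ⟨hSynInf, fun h => hNonSyn (fun 𝒱 => (h 𝒱).nonempty)⟩
end

section
/- Let G be a group and A ⊆ G. Then A has the productset property (there exist infinite B, C ⊆ G with B·C ⊆ A) if and only if there exist nonprincipal ultrafilters 𝒰, 𝒱 on G such that {b ∈ G : {c ∈ G : b·c ∈ A} ∈ 𝒱} ∈ 𝒰 and {c ∈ G : {b ∈ G : b·c ∈ A} ∈ 𝒰} ∈ 𝒱. -/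
open Filter Set

section Aux

variable {α : Type*}

lemma free_mem_infinite {𝒰 : Ultrafilter α} (h : ∀ S : Set α, S.Finite → S ∉ 𝒰)
    {S : Set α} (hS : S ∈ 𝒰) : S.Infinite := fun hfin => h S hfin hS

lemma exists_fresh {𝒰 : Ultrafilter α} (h : ∀ S : Set α, S.Finite → S ∉ 𝒰)
    {S : Set α} (hS : S ∈ 𝒰) {T : Set α} (hT : T.Finite) : ∃ x, x ∈ S ∧ x ∉ T := by
  obtain ⟨x, hx⟩ := ((free_mem_infinite h hS).diff hT).nonempty
  exact ⟨x, hx.1, hx.2⟩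

end Aux

/-- `A ⊆ G` has the productset property if and only if there are nonprincipal
ultrafilters `𝒰, 𝒱` on `G` with `A ∈ (𝒰 ⊗ 𝒱) ∩ (𝒱 ⊗ 𝒰)` under the
multiplication map. -/
theorem stmt11 {G : Type*} [Group G] (A : Set G) :
    (∃ B C : Set G, B.Infinite ∧ C.Infinite ∧ ∀ b ∈ B, ∀ c ∈ C, b * c ∈ A) ↔
    ∃ 𝒰 𝒱 : Ultrafilter G,
      (∀ S : Set G, S.Finite → S ∉ 𝒰) ∧ (∀ S : Set G, S.Finite → S ∉ 𝒱) ∧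
      {b : G | {c : G | b * c ∈ A} ∈ 𝒱} ∈ 𝒰 ∧
      {c : G | {b : G | b * c ∈ A} ∈ 𝒰} ∈ 𝒱 := by
  constructor
  · rintro ⟨B, C, hB, hC, hBC⟩
    have hUB : (cofinite ⊓ 𝓟 B).NeBot := cofinite_inf_principal_neBot_iff.mpr hB
    have hVC : (cofinite ⊓ 𝓟 C).NeBot := cofinite_inf_principal_neBot_iff.mpr hC
    refine ⟨Ultrafilter.of (cofinite ⊓ 𝓟 B), Ultrafilter.of (cofinite ⊓ 𝓟 C), ?_, ?_, ?_, ?_⟩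
    · intro S hS hmem
      have h1 : Sᶜ ∈ Ultrafilter.of (cofinite ⊓ 𝓟 B) :=
        Ultrafilter.of_le _ (inf_le_left (b := 𝓟 B) hS.compl_mem_cofinite)
      exact absurd ((Ultrafilter.of (cofinite ⊓ 𝓟 B)).toFilter.inter_mem hmem h1)
        (by simp)
    · intro S hS hmem
      have h1 : Sᶜ ∈ Ultrafilter.of (cofinite ⊓ 𝓟 C) :=
        Ultrafilter.of_le _ (inf_le_left (b := 𝓟 C) hS.compl_mem_cofinite)
      exact absurd ((Ultrafilter.of (cofinite ⊓ 𝓟 C)).toFilter.inter_mem hmem h1)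
        (by simp)
    · have hBmem : B ∈ Ultrafilter.of (cofinite ⊓ 𝓟 B) :=
        Ultrafilter.of_le _ (inf_le_right (a := cofinite) (mem_principal_self B))
      refine mem_of_superset hBmem fun b hb => ?_
      have hCmem : C ∈ Ultrafilter.of (cofinite ⊓ 𝓟 C) :=
        Ultrafilter.of_le _ (inf_le_right (a := cofinite) (mem_principal_self C))
      exact mem_of_superset hCmem fun c hc => hBC b hb c hc
    · have hCmem : C ∈ Ultrafilter.of (cofinite ⊓ 𝓟 C) :=
        Ultrafilter.of_le _ (inf_le_right (a := cofinite) (mem_principal_self C))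
      refine mem_of_superset hCmem fun c hc => ?_
      have hBmem : B ∈ Ultrafilter.of (cofinite ⊓ 𝓟 B) :=
        Ultrafilter.of_le _ (inf_le_right (a := cofinite) (mem_principal_self B))
      exact mem_of_superset hBmem fun b hb => hBC b hb c hc
  · rintro ⟨𝒰, 𝒱, hU, hV, hPU, hQV⟩
    classical
    set P : Set G := {b : G | {c : G | b * c ∈ A} ∈ 𝒱} with hPdef
    set Q : Set G := {c : G | {b : G | b * c ∈ A} ∈ 𝒰} with hQdef
    -- the invariant for pairs of lists
    let Inv : List G × List G → Prop := fun p =>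
      p.1.length = p.2.length ∧ p.1.Nodup ∧ p.2.Nodup ∧
        (∀ b ∈ p.1, b ∈ P) ∧ (∀ c ∈ p.2, c ∈ Q) ∧
        ∀ b ∈ p.1, ∀ c ∈ p.2, b * c ∈ A
    -- existence of a step
    have step : ∀ p : List G × List G, Inv p →
        ∃ b c, b ∉ p.1 ∧ c ∉ p.2 ∧ Inv (b :: p.1, c :: p.2) := by
      rintro ⟨bs, cs⟩ ⟨hlen, hnb, hnc, hbP, hcQ, hA⟩
      -- pick b
      have hSb : (P ∩ ⋂ c ∈ {c | c ∈ cs}, {b : G | b * c ∈ A}) ∈ 𝒰 := by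
        refine inter_mem hPU ?_
        rw [biInter_mem cs.finite_toSet]
        intro c hc
        exact hcQ c hc
      obtain ⟨b, hbmem, hbnew⟩ := exists_fresh hU hSb bs.finite_toSet
      have hbP' : b ∈ P := hbmem.1
      have hbA : ∀ c ∈ cs, b * c ∈ A := by
        intro c hc
        have := hbmem.2
        simp only [Set.mem_iInter] at this
        exact this c hc
      -- pick c
      have hSc : (Q ∩ ⋂ b' ∈ {b' | b' ∈ b :: bs}, {c : G | b' * c ∈ A}) ∈ 𝒱 := by
        refine inter_mem hQV ?_
        rw [biInter_mem (b :: bs).finite_toSet]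
        intro b' hb'
        rcases List.mem_cons.mp hb' with h | h
        · exact h ▸ hbP'
        · exact hbP b' h
      obtain ⟨c, hcmem, hcnew⟩ := exists_fresh hV hSc cs.finite_toSet
      have hcA : ∀ b' ∈ b :: bs, b' * c ∈ A := by
        intro b' hb'
        have := hcmem.2
        simp only [Set.mem_iInter] at this
        exact this b' hb'
      refine ⟨b, c, hbnew, hcnew, ?_⟩
      refine ⟨by simp [hlen], List.nodup_cons.mpr ⟨hbnew, hnb⟩,
        List.nodup_cons.mpr ⟨hcnew, hnc⟩, ?_, ?_, ?_⟩
      · intro x hx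
        rcases List.mem_cons.mp hx with h | h
        · exact h ▸ hbP'
        · exact hbP x h
      · intro x hx
        rcases List.mem_cons.mp hx with h | h
        · exact h ▸ hcmem.1
        · exact hcQ x h
      · intro x hx y hy
        rcases List.mem_cons.mp hy with h | h
        · exact h ▸ hcA x hx
        · rcases List.mem_cons.mp hx with h' | h'
          · exact h' ▸ hbA y h
          · exact hA x h' y h
    -- build the sequence of states
    choose fb fc hfb hfc hInv using step
    let f : ℕ → {p : List G × List G // Inv p} := fun n =>
      Nat.rec ⟨([], []), by simp [Inv]⟩
        (fun _ s => ⟨(fb s.1 s.2 :: s.1.1, fc s.1 s.2 :: s.1.2), hInv s.1 s.2⟩) n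
    have hfsucc : ∀ n, (f (n + 1)).1 =
        (fb (f n).1 (f n).2 :: (f n).1.1, fc (f n).1 (f n).2 :: (f n).1.2) := fun n => rfl
    have hlen : ∀ n, (f n).1.1.length = n := by
      intro n
      induction n with
      | zero => rfl
      | succ n ih => rw [hfsucc n]; simpa using ih
    have hmono1 : ∀ m n, m ≤ n → ∀ x ∈ (f m).1.1, x ∈ (f n).1.1 := by
      intro m n hmn
      induction n with
      | zero => intro x hx; rwa [Nat.le_zero.mp hmn] at hx
      | succ n ih =>
        rcases Nat.le_succ_iff.mp hmn  with h | h
        · intro x hx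
          rw [hfsucc n]
          exact List.mem_cons_of_mem _ (ih h x hx)
        · intro x hx; rwa [h] at hx
    have hmono2 : ∀ m n, m ≤ n → ∀ x ∈ (f m).1.2, x ∈ (f n).1.2 := by
      intro m n hmn
      induction n with
      | zero => intro x hx; rwa [Nat.le_zero.mp hmn] at hx
      | succ n ih =>
        rcases Nat.le_succ_iff.mp hmn  with h | h
        · intro x hx
          rw [hfsucc n]
          exact List.mem_cons_of_mem _ (ih h x hx)
        · intro x hx; rwa [h] at hx
    refine ⟨{x | ∃ n, x ∈ (f n).1.1}, {x | ∃ n, x ∈ (f n).1.2}, ?_, ?_, ?_⟩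
    · intro hfin
      have hsub : ∀ n, ((f n).1.1.toFinset : Set G) ⊆ {x | ∃ n, x ∈ (f n).1.1} := by
        intro n x hx
        exact ⟨n, by simpa using hx⟩
      set k := hfin.toFinset.card
      have h1 : (f (k + 1)).1.1.toFinset ⊆ hfin.toFinset := by
        intro x hx
        rw [Set.Finite.mem_toFinset]
        exact hsub (k + 1) (by simpa using hx)
      have h2 := Finset.card_le_card h1
      rw [List.toFinset_card_of_nodup (f (k + 1)).2.2.1, hlen (k + 1)] at h2
      omega
    · intro hfin
      have hsub : ∀ n, ((f n).1.2.toFinset : Set G) ⊆ {x | ∃ n, x ∈ (f n).1.2} := by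
        intro n x hx
        exact ⟨n, by simpa using hx⟩
      set k := hfin.toFinset.card
      have h1 : (f (k + 1)).1.2.toFinset ⊆ hfin.toFinset := by
        intro x hx
        rw [Set.Finite.mem_toFinset]
        exact hsub (k + 1) (by simpa using hx)
      have h2 := Finset.card_le_card h1
      have hlen2 : (f (k + 1)).1.2.length = k + 1 := by
        rw [← (f (k + 1)).2.1, hlen (k + 1)]
      rw [List.toFinset_card_of_nodup (f (k + 1)).2.2.2.1, hlen2] at h2
      omega
    · rintro b ⟨m, hm⟩ c ⟨n, hn⟩
      have hb' := hmono1 m (max m n) (le_max_left m n) b hm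
      have hc' := hmono2 n (max m n) (le_max_right m n) c hn
      exact (f (max m n)).2.2.2.2.2.2 b hb' c hc'
end

section
/- Let G be a group and A ⊆ G. Then A has the 1-sided productset property if and only if there exists a nonprincipal ultrafilter 𝒱 on G such that the set {b ∈ G : {c ∈ G : b·c ∈ A} ∈ 𝒱} is infinite. -/
/-- `A ⊆ G` has the 1-sided productset property if and only if there is a
nonprincipal ultrafilter `𝒱` on `G` such that `{b : {c : b·c ∈ A} ∈ 𝒱}` is
infinite. -/
theorem stmt12 {G : Type*} [Group G] (A : Set G) :
    (∃ b c : ℕ → G, Function.Injective b ∧ Function.Injective c ∧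
      ∀ i j : ℕ, i ≤ j → b i * c j ∈ A) ↔
    ∃ 𝒱 : Ultrafilter G, (∀ S : Set G, S.Finite → S ∉ 𝒱) ∧
      ({b : G | {c : G | b * c ∈ A} ∈ 𝒱}).Infinite := by
  constructor
  · rintro ⟨b, c, hb, hc, hA⟩
    let U : Ultrafilter ℕ := Ultrafilter.of Filter.cofinite
    have hU : (U : Filter ℕ) ≤ Filter.cofinite := Ultrafilter.of_le _
    have hUcof : ∀ T : Set ℕ, T.Finite → T ∉ U := by
      intro T hT hTU
      have : Tᶜ ∈ U := hU (by simpa [Filter.mem_cofinite] using hT)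
      exact (Ultrafilter.compl_mem_iff_notMem.mp this) hTU
    refine ⟨U.map c, ?_, ?_⟩
    · intro S hS hSU
      have : c ⁻¹' S ∈ U := hSU
      exact hUcof _ (hS.preimage hc.injOn) this
    · apply Set.infinite_of_injective_forall_mem hb
      intro i
      show {x : G | b i * x ∈ A} ∈ U.map c
      have : {j : ℕ | b i * c j ∈ A} ∈ U := by
        have hsub : Set.Ici i ⊆ {j : ℕ | b i * c j ∈ A} := fun j hj => hA i j hj
        exact U.toFilter.mem_of_superset
          (hU (by simpa [Filter.mem_cofinite] using Set.finite_Iio i)) hsub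
      exact this
  · rintro ⟨𝒱, h𝒱, hInf⟩
    classical
    have hmem : ∀ S : Set G, S ∈ 𝒱 → S.Infinite := by
      intro S hS
      by_contra h
      exact h𝒱 S (Set.not_infinite.mp h) hS
    let e := Set.Infinite.natEmbedding _ hInf
    let b : ℕ → G := fun n => (e n : G)
    have hbinj : Function.Injective b :=
      Subtype.coe_injective.comp e.injective
    have hbB : ∀ n, {c : G | b n * c ∈ A} ∈ 𝒱 := fun n => (e n).2
    set S : ℕ → Set G := fun j => {x : G | ∀ i ≤ j, b i * x ∈ A} with hSdef
    have hS : ∀ j, S j ∈ 𝒱 := by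
      intro j
      have : S j = ⋂ i ∈ Finset.range (j + 1), {x : G | b i * x ∈ A} := by
        ext x
        simp [hSdef, Nat.lt_succ_iff]
      rw [this]
      exact (Filter.biInter_finset_mem _).mpr fun i _ => hbB i
    have hg : ∀ (j : ℕ) (s : Finset G), ∃ x, x ∈ S j ∧ x ∉ s := by
      intro j s
      obtain ⟨x, hx⟩ := ((hmem _ (hS j)).diff s.finite_toSet).nonempty
      exact ⟨x, hx.1, by simpa using hx.2⟩
    choose g hg1 hg2 using hg
    let F : ℕ → Finset G := fun n => Nat.rec ∅ (fun j acc => insert (g j acc) acc) n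
    let c : ℕ → G := fun j => g j (F j)
    have hFsucc : ∀ j, F (j + 1) = insert (c j) (F j) := fun j => rfl
    have hFmono : ∀ i j, i ≤ j → F i ⊆ F j := by
      intro i j h
      induction h with
      | refl => exact subset_rfl
      | step h ih => exact ih.trans (by rw [hFsucc]; exact Finset.subset_insert _ _)
    have hcF : ∀ i j, i < j → c i ∈ F j := by
      intro i j h
      exact hFmono (i + 1) j h (by rw [hFsucc]; exact Finset.mem_insert_self _ _)
    have hne : ∀ i j, i < j → c i ≠ c j := by
      intro i j h heq
      have := hcF i j h
      rw [heq] at this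
      exact hg2 j (F j) this
    have hcinj : Function.Injective c := by
      intro i j h
      rcases lt_trichotomy i j with hlt | heq | hlt
      · exact absurd h (hne i j hlt)
      · exact heq
      · exact absurd h.symm (hne j i hlt)
    exact ⟨b, c, hbinj, hcinj, fun i j hij => hg1 j (F j) i hij⟩
end

section
/- Let A = {2^n : n ∈ ℕ} ⊆ ℤ. Then A does not have the sumset property: there do not exist infinite sets B, C ⊆ ℤ with B + C ⊆ A. -/
/-!
Fix two distinct elements `c₁ < c₂` of `C`. For every `b ∈ B`, both `b + c₁` and `b + c₂` are
powers of two, and two distinct powers of two differ by at least the smaller one. Hence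
`1 ≤ b + c₁ ≤ c₂ - c₁`, which confines `B` to a bounded interval.
-/

lemma two_pow_le_sub_of_two_pow_lt {R : Type*} [CommRing R] [LinearOrder R]
    [IsStrictOrderedRing R] {m n : ℕ} (h : (2 : R) ^ m < 2 ^ n) :
    (2 : R) ^ m ≤ 2 ^ n - 2 ^ m := by
  have hmn : m < n := (pow_lt_pow_iff_right₀ one_lt_two).mp h
  have h2 : (2 : R) ^ (m + 1) ≤ 2 ^ n := pow_le_pow_right₀ one_le_two hmn
  rw [pow_succ] at h2
  linarith

lemma finite_setOf_add_mem_two_pow {c₁ c₂ : ℤ} (hlt : c₁ < c₂) :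
    {b : ℤ | (∃ m : ℕ, b + c₁ = 2 ^ m) ∧ ∃ n : ℕ, b + c₂ = 2 ^ n}.Finite := by
  refine (Set.finite_Icc (1 - c₁) (c₂ - 2 * c₁)).subset ?_
  rintro b ⟨⟨m, hm⟩, n, hn⟩
  have hpos : (1 : ℤ) ≤ 2 ^ m := one_le_pow₀ one_le_two
  have hgap : (2 : ℤ) ^ m ≤ 2 ^ n - 2 ^ m := two_pow_le_sub_of_two_pow_lt (by omega)
  constructor <;> omega

/-- The set of powers of 2 in `ℤ` does not have the sumset property. -/
theorem stmt13 :
    ¬ ∃ B C : Set ℤ, B.Infinite ∧ C.Infinite ∧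
      ∀ b ∈ B, ∀ c ∈ C, b + c ∈ {x : ℤ | ∃ n : ℕ, x = 2 ^ n} := by
  rintro ⟨B, C, hB, hC, hBC⟩
  obtain ⟨c₁, hc₁, c₂, hc₂, hne⟩ := hC.nontrivial
  wlog hlt : c₁ < c₂ generalizing c₁ c₂
  · exact this c₂ hc₂ c₁ hc₁ hne.symm (hne.symm.lt_of_le (not_lt.mp hlt))
  exact hB ((finite_setOf_add_mem_two_pow hlt).subset fun b hb =>
    ⟨hBC b hb c₁ hc₁, hBC b hb c₂ hc₂⟩)
end

section
/- Let X be a set and P ⊆ X × X a symmetric-free relation. Suppose there exist injective sequences (b_i)_{i<ω}, (c_j)_{j<ω} in X such that (b_i, c_j) ∈ P for all i ≤ j, and there is a bound k such that there are no b_1,…,b_k, c_1,…,c_k with (b_i,c_j) ∈ P iff i ≤ j. Then there exist infinite subsets B, C ⊆ X with B × C ⊆ P. -/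
open Classical in
/-- Infinite Ramsey theorem for pairs, two colors. -/
theorem ramsey_pairs (f : ℕ → ℕ → Prop) :
    ∃ g : ℕ → ℕ, StrictMono g ∧
      ((∀ i j, i < j → f (g i) (g j)) ∨ (∀ i j, i < j → ¬ f (g i) (g j))) := by
  classical
  set nextS : Set ℕ → Set ℕ := fun S =>
    if {s ∈ S | sInf S < s ∧ f (sInf S) s}.Infinite
    then {s ∈ S | sInf S < s ∧ f (sInf S) s}
    else {s ∈ S | sInf S < s ∧ ¬ f (sInf S) s} with hnextS
  set Ss : ℕ → Set ℕ := fun n => nextS^[n] Set.univ with hSs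
  have hstep : ∀ n, Ss (n + 1) = nextS (Ss n) := fun n =>
    Function.iterate_succ_apply' nextS n _
  set a : ℕ → ℕ := fun n => sInf (Ss n) with ha
  set col : ℕ → Prop := fun n => {s ∈ Ss n | a n < s ∧ f (a n) s}.Infinite with hcoldef
  -- each Ss n is infinite
  have hSinf : ∀ n, (Ss n).Infinite := by
    intro n
    induction n with
    | zero => exact Set.infinite_univ
    | succ n ih =>
      rw [hstep n, hnextS]; beta_reduce
      by_cases h : {s ∈ Ss n | sInf (Ss n) < s ∧ f (sInf (Ss n)) s}.Infinite
      · rwa [if_pos h]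
      · rw [if_neg h]
        have h1 : (Ss n \ Set.Iic (sInf (Ss n))).Infinite :=
          ih.diff (Set.finite_Iic _)
        have hsub : Ss n \ Set.Iic (sInf (Ss n)) ⊆
            {s ∈ Ss n | sInf (Ss n) < s ∧ f (sInf (Ss n)) s} ∪
            {s ∈ Ss n | sInf (Ss n) < s ∧ ¬ f (sInf (Ss n)) s} := by
          intro s hs
          rcases hs with ⟨hsS, hle⟩
          rw [Set.mem_Iic, not_le] at hle
          by_cases hf : f (sInf (Ss n)) s
          · exact Or.inl ⟨hsS, hle, hf⟩
          · exact Or.inr ⟨hsS, hle, hf⟩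
        rcases Set.infinite_union.mp (h1.mono hsub) with h' | h'
        · exact absurd h' h
        · exact h'
  have hSsucc : ∀ n, Ss (n+1) ⊆ {s ∈ Ss n | a n < s} ∧
      (∀ s ∈ Ss (n+1), col n → f (a n) s) ∧
      (∀ s ∈ Ss (n+1), ¬ col n → ¬ f (a n) s) := by
    intro n
    rw [hstep n, hnextS]; beta_reduce
    by_cases h : col n
    · rw [hcoldef] at h
      simp only [ha] at h ⊢
      rw [if_pos h]
      exact ⟨fun s hs => ⟨hs.1, hs.2.1⟩, fun s hs _ => hs.2.2,
        fun s _ hc => absurd (by rw [hcoldef]; exact h) hc⟩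
    · rw [hcoldef] at h
      simp only [ha] at h ⊢
      rw [if_neg h]
      exact ⟨fun s hs => ⟨hs.1, hs.2.1⟩,
        fun s _ hc => absurd (by rw [hcoldef] at hc; exact hc) h,
        fun s hs _ => hs.2.2⟩
  have hmono : ∀ m n, m ≤ n → Ss n ⊆ Ss m := by
    intro m n h
    induction n with
    | zero => cases Nat.le_zero.mp h; exact fun _ => id
    | succ n ih =>
      rcases Nat.lt_or_ge m (n+1) with h' | h'
      · exact fun s hs => ih (Nat.lt_succ_iff.mp h') ((hSsucc n).1 hs).1
      · cases le_antisymm h h'; exact fun _ => id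
  have hmem : ∀ n, a n ∈ Ss n := fun n => Nat.sInf_mem ((hSinf n).nonempty)
  have hamono : StrictMono a := strictMono_nat_of_lt_succ fun n =>
    ((hSsucc n).1 (hmem (n+1))).2
  have hcol : ∀ m n, m < n → (col m → f (a m) (a n)) ∧ (¬ col m → ¬ f (a m) (a n)) := by
    intro m n h
    have hnm : a n ∈ Ss (m+1) := hmono (m+1) n h (hmem n)
    exact ⟨fun hc => (hSsucc m).2.1 _ hnm hc, fun hc => (hSsucc m).2.2 _ hnm hc⟩
  by_cases hinf : {n | col n}.Infinite
  · refine ⟨a ∘ Nat.nth col, hamono.comp (Nat.nth_strictMono hinf), Or.inl fun i j hij => ?_⟩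
    exact (hcol _ _ (Nat.nth_strictMono hinf hij)).1 (Nat.nth_mem_of_infinite hinf i)
  · have h2 : {n | ¬ col n}.Infinite := by
      rw [Set.not_infinite] at hinf
      by_contra h2
      rw [Set.not_infinite] at h2
      have huniv : ({n | col n} ∪ {n | ¬ col n} : Set ℕ) = Set.univ := by
        ext n; simp [Classical.em]
      exact Set.infinite_univ (huniv ▸ hinf.union h2)
    refine ⟨a ∘ Nat.nth (fun n => ¬ col n), hamono.comp (Nat.nth_strictMono h2),
      Or.inr fun i j hij => ?_⟩
    exact (hcol _ _ (Nat.nth_strictMono h2 hij)).2 (Nat.nth_mem_of_infinite h2 i)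

/-- Abstract Ramsey-theoretic core: if a relation `P ⊆ X × X` admits injective
sequences `(bᵢ), (cⱼ)` with `(bᵢ, cⱼ) ∈ P` for all `i ≤ j`, and `P` has no order
configurations of some length `k`, then `P` contains a product `B × C` of two
infinite sets. -/
theorem stmt14 {X : Type*} (P : Set (X × X))
    (b c : ℕ → X) (hb : Function.Injective b) (hc : Function.Injective c)
    (hP : ∀ i j : ℕ, i ≤ j → (b i, c j) ∈ P)
    (hstable : ∃ k : ℕ, ¬ ∃ b' c' : Fin k → X,
      ∀ i j : Fin k, (b' i, c' j) ∈ P ↔ i ≤ j) :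
    ∃ B C : Set X, B.Infinite ∧ C.Infinite ∧ ∀ x ∈ B, ∀ y ∈ C, (x, y) ∈ P := by
  obtain ⟨k, hk⟩ := hstable
  obtain ⟨g, hg, hmono⟩ := ramsey_pairs (fun i j => (b j, c i) ∈ P)
  rcases hmono with hpos | hneg
  · refine ⟨Set.range (b ∘ g), Set.range (c ∘ g),
      Set.infinite_range_of_injective (hb.comp hg.injective),
      Set.infinite_range_of_injective (hc.comp hg.injective), ?_⟩
    rintro x ⟨i, rfl⟩ y ⟨j, rfl⟩
    rcases le_or_gt i j with h | h
    · exact hP _ _ (hg.monotone h)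
    · exact hpos j i h
  · exfalso
    apply hk
    refine ⟨fun i => b (g i), fun j => c (g j), fun i j => ?_⟩
    constructor
    · intro hmem
      by_contra hle
      rw [not_le] at hle
      exact hneg j i (by exact_mod_cast hle) hmem
    · intro hle
      exact hP _ _ (hg.monotone hle)
end

section
/- In the structure (ℤ, +, <, 0), with 𝔾 a sufficiently saturated elementary extension, there do not exist b, c ∈ 𝔾 \ ℤ such that b + c > 0 and both tp(b/ℤc) and tp(c/ℤb) are finitely satisfiable in ℤ. -/
open FirstOrder

/-- The language of ordered additive groups used here: a constant `0`, a binary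
function `+`, and a binary relation `<`. -/
def OAGLang : Language where
  Functions n :=
    match n with
    | 0 => Unit
    | 2 => Unit
    | _ => Empty
  Relations n :=
    match n with
    | 2 => Unit
    | _ => Empty

/-- The `0` symbol. -/
def OAGLang.zeroSym : OAGLang.Functions 0 := ()

/-- The `+` symbol. -/
def OAGLang.addSym : OAGLang.Functions 2 := ()

/-- The `<` symbol. -/
def OAGLang.ltSym : OAGLang.Relations 2 := ()

/-- The standard interpretation of this language in `ℤ`. -/
instance : OAGLang.Structure ℤ where
  funMap {n} :=
    match n with
    | 0 => fun _ _ => (0 : ℤ)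
    | 2 => fun _ v => v 0 + v 1
    | 1 => fun f _ => f.elim
    | _ + 3 => fun f _ => f.elim
  RelMap {n} :=
    match n with
    | 2 => fun _ v => v 0 < v 1
    | 0 => fun r _ => r.elim
    | 1 => fun r _ => r.elim
    | _ + 3 => fun r _ => r.elim

namespace Stmt16Aux

open Language

/-- addition term -/
def tadd {α : Type*} (t₁ t₂ : OAGLang.Term α) : OAGLang.Term α :=
  Term.func OAGLang.addSym ![t₁, t₂]

/-- zero term -/
def tzero {α : Type*} : OAGLang.Term α :=
  Term.func OAGLang.zeroSym ![]

/-- less-than formula -/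
def flt {α : Type*} (t₁ t₂ : OAGLang.Term α) : OAGLang.Formula α :=
  OAGLang.ltSym.formula₂ t₁ t₂

variable {M : Type*} [OAGLang.Structure M]

lemma realize_tadd {α : Type*} (t₁ t₂ : OAGLang.Term α) (v : α → M) :
    (tadd t₁ t₂).realize v =
      Structure.funMap OAGLang.addSym ![t₁.realize v, t₂.realize v] := by
  simp only [tadd, Term.realize]
  congr 1
  funext i
  fin_cases i <;> rfl

lemma realize_tzero {α : Type*} (v : α → M) :
    (tzero : OAGLang.Term α).realize v =
      Structure.funMap OAGLang.zeroSym (default : Fin 0 → M) := by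
  simp only [tzero, Term.realize]
  congr 1
  funext i
  exact i.elim0

lemma realize_flt {α : Type*} (t₁ t₂ : OAGLang.Term α) (v : α → M) :
    (flt t₁ t₂).Realize v ↔
      Structure.RelMap OAGLang.ltSym ![t₁.realize v, t₂.realize v] :=
  Formula.realize_rel₂

/-- interpretations over ℤ -/
lemma int_lt (u v : ℤ) : Structure.RelMap OAGLang.ltSym ![u, v] ↔ u < v := Iff.rfl

lemma int_add (u v : ℤ) : Structure.funMap OAGLang.addSym ![u, v] = u + v := rfl

lemma int_zero (d : Fin 0 → ℤ) : Structure.funMap OAGLang.zeroSym d = 0 := rfl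

/-- finite conjunction -/
def conjList {α : Type*} : List (OAGLang.Formula α) → OAGLang.Formula α
  | [] => ⊤
  | φ :: l => φ ⊓ conjList l

lemma realize_conjList {α : Type*} (v : α → M) :
    ∀ l : List (OAGLang.Formula α),
      (conjList l).Realize v ↔ ∀ φ ∈ l, φ.Realize v
  | [] => by simp [conjList, Formula.Realize]
  | φ :: l => by
      simp [conjList, Formula.realize_inf, realize_conjList v l]

/-- Core lemma: if `x ∉ range f` realizes a formula over parameters from `ℤ`
whose solution set in `ℤ` is finite, then `tp(x/ℤ)` is not finitely
satisfiable in `ℤ`. -/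
lemma core {𝔾 : Type*} [OAGLang.Structure 𝔾] (f : ℤ ↪ₑ[OAGLang] 𝔾) (x : 𝔾)
    (hx : x ∉ Set.range f) (k : ℕ) (p : Fin k → ℤ)
    (φ : OAGLang.Formula (Fin k ⊕ Fin 1))
    (hreal : φ.Realize (Sum.elim (fun i => f (p i)) ![x]))
    (hfin : {a : ℤ | φ.Realize (Sum.elim p ![a])}.Finite)
    (hfs : ∀ (k' : ℕ) (ψ : OAGLang.Formula (Fin k' ⊕ Fin 1)) (q : Fin k' → ℤ),
      ψ.Realize (Sum.elim (fun i => f (q i)) ![x]) →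
        ∃ a : ℤ, ψ.Realize (Sum.elim (fun i => f (q i)) ![f a])) : False := by
  classical
  set l : List ℤ := hfin.toFinset.toList with hl
  set m : ℕ := l.length with hm
  -- parameters: the original p's, then the members of l
  set q : Fin (k + m) → ℤ := Fin.addCases p l.get with hq
  -- the strengthened formula
  set θ : OAGLang.Formula (Fin (k + m) ⊕ Fin 1) :=
    (φ.relabel (Sum.map (Fin.castAdd m) id)) ⊓
      conjList (List.ofFn fun j : Fin m =>
        ((Term.var (Sum.inr 0) : OAGLang.Term (Fin (k + m) ⊕ Fin 1)).equal
          (Term.var (Sum.inl (Fin.natAdd k j)))).not) with hθ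
  have hcomp : ∀ y : 𝔾,
      (Sum.elim (fun i => f (q i)) ![y]) ∘ Sum.map (Fin.castAdd m) id =
        Sum.elim (fun i => f (p i)) ![y] := by
    intro y
    funext i
    cases i with
    | inl a => simp [hq, Fin.addCases_left]
    | inr a => rfl
  have hθreal : θ.Realize (Sum.elim (fun i => f (q i)) ![x]) := by
    rw [hθ, Formula.realize_inf, Formula.realize_relabel, hcomp,
      realize_conjList]
    refine ⟨hreal, ?_⟩
    intro ψ hψ
    rw [List.mem_ofFn] at hψ
    obtain ⟨j, rfl⟩ := hψ
    rw [Formula.realize_not, Formula.realize_equal]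
    simp only [Term.realize_var, Sum.elim_inl, Sum.elim_inr]
    intro hEq
    exact hx ⟨q (Fin.natAdd k j), by simpa using hEq.symm⟩
  obtain ⟨a, ha⟩ := hfs (k + m) θ q hθreal
  rw [hθ, Formula.realize_inf, Formula.realize_relabel, hcomp,
    realize_conjList] at ha
  obtain ⟨ha1, ha2⟩ := ha
  -- pull the main part back to ℤ
  have hfun : (Sum.elim (fun i => f (p i)) ![f a]) =
      f ∘ (Sum.elim p ![a]) := by
    funext i
    cases i with
    | inl u => rfl
    | inr u =>
        fin_cases u
        rfl
  rw [hfun, f.map_formula] at ha1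
  have haS : a ∈ hfin.toFinset := by
    rw [Set.Finite.mem_toFinset]
    exact ha1
  have haL : a ∈ l := by
    rw [hl]
    exact Finset.mem_toList.2 haS
  obtain ⟨j, hj⟩ := List.get_of_mem haL
  have := ha2 (((Term.var (Sum.inr 0) : OAGLang.Term (Fin (k + m) ⊕ Fin 1)).equal
          (Term.var (Sum.inl (Fin.natAdd k j)))).not)
    (by rw [List.mem_ofFn]; exact ⟨j, rfl⟩)
  rw [Formula.realize_not, Formula.realize_equal] at this
  apply this
  simp only [Term.realize_var, Sum.elim_inl, Sum.elim_inr]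
  have : q (Fin.natAdd k j) = a := by
    rw [hq]
    simpa [Fin.addCases_right] using hj
  simp [this]

end Stmt16Aux

/-- Remark 3.9: in `Th(ℤ, +, <, 0)`, there do not exist elements `b, c ∉ ℤ` of an
elementary extension `𝔾` of `ℤ` with `b + c > 0` such that both `tp(b/ℤc)` and
`tp(c/ℤb)` are finitely satisfiable in `ℤ`.

Finite satisfiability of `tp(b/ℤc)` in `ℤ` is expressed by: every formula with
parameters from `ℤ ∪ {c}` realized by `b` in `𝔾` is realized by some element of
`ℤ` (in place of `b`), and symmetrically for `tp(c/ℤb)`. -/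
theorem stmt16 (𝔾 : Type*) [OAGLang.Structure 𝔾] (f : ℤ ↪ₑ[OAGLang] 𝔾)
    (b c : 𝔾) (hb : b ∉ Set.range f) (hc : c ∉ Set.range f)
    (hpos : Language.Structure.RelMap OAGLang.ltSym
      ![Language.Structure.funMap OAGLang.zeroSym (default : Fin 0 → 𝔾),
        Language.Structure.funMap OAGLang.addSym ![b, c] ])
    (hfs_b : ∀ (k : ℕ) (φ : OAGLang.Formula (Fin k ⊕ Fin 2)) (p : Fin k → ℤ),
      φ.Realize (Sum.elim (fun i => f (p i)) ![b, c]) →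
        ∃ a : ℤ, φ.Realize (Sum.elim (fun i => f (p i)) ![f a, c]))
    (hfs_c : ∀ (k : ℕ) (φ : OAGLang.Formula (Fin k ⊕ Fin 2)) (p : Fin k → ℤ),
      φ.Realize (Sum.elim (fun i => f (p i)) ![b, c]) →
        ∃ a : ℤ, φ.Realize (Sum.elim (fun i => f (p i)) ![b, f a])) :
    False := by
  classical
  open Stmt16Aux Language in
  -- one-variable finite-satisfiability for b and for c
  have hfsb1 : ∀ (k' : ℕ) (ψ : OAGLang.Formula (Fin k' ⊕ Fin 1)) (q : Fin k' → ℤ),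
      ψ.Realize (Sum.elim (fun i => f (q i)) ![b]) →
        ∃ a : ℤ, ψ.Realize (Sum.elim (fun i => f (q i)) ![f a]) := by
    intro k' ψ q hψ
    have hcomp : ∀ y : 𝔾,
        (Sum.elim (fun i => f (q i)) ![y, c]) ∘ Sum.map id (fun _ => (0 : Fin 2)) =
          Sum.elim (fun i => f (q i)) ![y] := by
      intro y
      funext i
      cases i with
      | inl u => rfl
      | inr u => fin_cases u; rfl
    obtain ⟨a, ha⟩ := hfs_b k' (ψ.relabel (Sum.map id (fun _ => (0 : Fin 2)))) q
      (by rw [Formula.realize_relabel, hcomp]; exact hψ)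
    rw [Formula.realize_relabel, hcomp] at ha
    exact ⟨a, ha⟩
  have hfsc1 : ∀ (k' : ℕ) (ψ : OAGLang.Formula (Fin k' ⊕ Fin 1)) (q : Fin k' → ℤ),
      ψ.Realize (Sum.elim (fun i => f (q i)) ![c]) →
        ∃ a : ℤ, ψ.Realize (Sum.elim (fun i => f (q i)) ![b, f a]
          ∘ Sum.map id (fun _ => (1 : Fin 2))) := by
    intro k' ψ q hψ
    have hcomp :
        (Sum.elim (fun i => f (q i)) ![b, c]) ∘ Sum.map id (fun _ => (1 : Fin 2)) =
          Sum.elim (fun i => f (q i)) ![c] := by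
      funext i
      cases i with
      | inl u => rfl
      | inr u => fin_cases u; rfl
    obtain ⟨a, ha⟩ := hfs_c k' (ψ.relabel (Sum.map id (fun _ => (1 : Fin 2)))) q
      (by rw [Formula.realize_relabel, hcomp]; exact hψ)
    rw [Formula.realize_relabel] at ha
    exact ⟨a, ha⟩
  have hfsc1' : ∀ (k' : ℕ) (ψ : OAGLang.Formula (Fin k' ⊕ Fin 1)) (q : Fin k' → ℤ),
      ψ.Realize (Sum.elim (fun i => f (q i)) ![c]) →
        ∃ a : ℤ, ψ.Realize (Sum.elim (fun i => f (q i)) ![f a]) := by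
    intro k' ψ q hψ
    obtain ⟨a, ha⟩ := hfsc1 k' ψ q hψ
    refine ⟨a, ?_⟩
    have hcomp :
        (Sum.elim (fun i => f (q i)) ![b, f a]) ∘ Sum.map id (fun _ => (1 : Fin 2)) =
          Sum.elim (fun i => f (q i)) ![f a] := by
      funext i
      cases i with
      | inl u => rfl
      | inr u => fin_cases u; rfl
    rwa [hcomp] at ha
  -- notation for variables
  set xv : OAGLang.Term (Fin 0 ⊕ Fin 2) := Term.var (Sum.inr 0) with hxv
  set yv : OAGLang.Term (Fin 0 ⊕ Fin 2) := Term.var (Sum.inr 1) with hyv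
  by_cases h : Language.Structure.RelMap OAGLang.ltSym ![c, b]
  · -- case c < b : bound c between -a and a
    set ψ : OAGLang.Formula (Fin 0 ⊕ Fin 2) :=
      flt yv xv ⊓ flt tzero (tadd xv yv) with hψ
    have hψreal : ψ.Realize (Sum.elim (fun i => f (Fin.elim0 i)) ![b, c]) := by
      rw [hψ, Formula.realize_inf, realize_flt, realize_flt]
      simp only [realize_tadd, realize_tzero, hxv, hyv, Term.realize_var,
        Sum.elim_inr, Matrix.cons_val_zero, Matrix.cons_val_one, Matrix.head_cons]
      exact ⟨h, hpos⟩
    obtain ⟨a, ha⟩ := hfs_b 0 ψ Fin.elim0 hψreal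
    rw [hψ, Formula.realize_inf, realize_flt, realize_flt] at ha
    simp only [realize_tadd, realize_tzero, hxv, hyv, Term.realize_var,
      Sum.elim_inr, Matrix.cons_val_zero, Matrix.cons_val_one, Matrix.head_cons] at ha
    obtain ⟨ha1, ha2⟩ := ha
    -- ha1 : c < f a, ha2 : 0 < f a + c
    set x0 : OAGLang.Term (Fin 1 ⊕ Fin 1) := Term.var (Sum.inr 0) with hx0
    set pv : OAGLang.Term (Fin 1 ⊕ Fin 1) := Term.var (Sum.inl 0) with hpv
    set φ : OAGLang.Formula (Fin 1 ⊕ Fin 1) :=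
      flt x0 pv ⊓ flt tzero (tadd pv x0) with hφ
    refine core f c hc 1 ![a] φ ?_ ?_ hfsc1'
    · rw [hφ, Formula.realize_inf, realize_flt, realize_flt]
      simp only [realize_tadd, realize_tzero, hx0, hpv, Term.realize_var,
        Sum.elim_inl, Sum.elim_inr, Matrix.cons_val_zero, Matrix.cons_val_one,
        Matrix.head_cons]
      exact ⟨ha1, ha2⟩
    · apply Set.Finite.subset (Set.finite_Ioo (-a) a)
      intro t ht
      simp only [hφ, Set.mem_setOf_eq, Formula.realize_inf, realize_flt,
        realize_tadd, realize_tzero, hx0, hpv, Term.realize_var, Sum.elim_inl,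
        Sum.elim_inr, Matrix.cons_val_zero, Matrix.cons_val_one,
        Matrix.head_cons, int_lt, int_add, int_zero] at ht
      obtain ⟨h1, h2⟩ := ht
      constructor <;> omega
  · -- case ¬ c < b : bound b between -n and n
    set ψ : OAGLang.Formula (Fin 0 ⊕ Fin 2) :=
      (flt yv xv).not ⊓ flt tzero (tadd xv yv) with hψ
    have hψreal : ψ.Realize (Sum.elim (fun i => f (Fin.elim0 i)) ![b, c]) := by
      rw [hψ, Formula.realize_inf, Formula.realize_not, realize_flt, realize_flt]
      simp only [realize_tadd, realize_tzero, hxv, hyv, Term.realize_var,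
        Sum.elim_inr, Matrix.cons_val_zero, Matrix.cons_val_one, Matrix.head_cons]
      exact ⟨h, hpos⟩
    obtain ⟨n, hn⟩ := hfs_c 0 ψ Fin.elim0 hψreal
    rw [hψ, Formula.realize_inf, Formula.realize_not, realize_flt, realize_flt] at hn
    simp only [realize_tadd, realize_tzero, hxv, hyv, Term.realize_var,
      Sum.elim_inr, Matrix.cons_val_zero, Matrix.cons_val_one, Matrix.head_cons] at hn
    obtain ⟨hn1, hn2⟩ := hn
    -- hn1 : ¬ (f n < b), hn2 : 0 < b + f n
    set x0 : OAGLang.Term (Fin 1 ⊕ Fin 1) := Term.var (Sum.inr 0) with hx0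
    set pv : OAGLang.Term (Fin 1 ⊕ Fin 1) := Term.var (Sum.inl 0) with hpv
    set φ : OAGLang.Formula (Fin 1 ⊕ Fin 1) :=
      (flt pv x0).not ⊓ flt tzero (tadd x0 pv) with hφ
    refine core f b hb 1 ![n] φ ?_ ?_ hfsb1
    · rw [hφ, Formula.realize_inf, Formula.realize_not, realize_flt, realize_flt]
      simp only [realize_tadd, realize_tzero, hx0, hpv, Term.realize_var,
        Sum.elim_inl, Sum.elim_inr, Matrix.cons_val_zero, Matrix.cons_val_one,
        Matrix.head_cons]
      exact ⟨hn1, hn2⟩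
    · apply Set.Finite.subset (Set.finite_Ioc (-n) n)
      intro t ht
      simp only [hφ, Set.mem_setOf_eq, Formula.realize_inf, Formula.realize_not,
        realize_flt, realize_tadd, realize_tzero, hx0, hpv, Term.realize_var,
        Sum.elim_inl, Sum.elim_inr, Matrix.cons_val_zero, Matrix.cons_val_one,
        Matrix.head_cons, int_lt, int_add, int_zero] at ht
      obtain ⟨h1, h2⟩ := ht
      constructor <;> omega
end

section
/- Let A ⊆ ℤ with BD(A) > 0, and fix α with 0 < α ≤ BD(A). Then for every n and every ε > 0 there exist m ∈ ℤ and x ∈ [m+1, m+n] such that the interval-density condition |A ∩ [x, x + k)| / k ≥ α/2 − ε holds for all 1 ≤ k ≤ √n. (Finitary version of the key density lemma.) -/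
lemma stmt18_card_le (A : Set ℤ) (x : ℤ) (L : ℕ) :
    (A ∩ Set.Ico x (x + L)).ncard ≤ L := by
  calc (A ∩ Set.Ico x (x + L)).ncard
      ≤ (Set.Ico x (x + L)).ncard :=
        Set.ncard_le_ncard Set.inter_subset_right (Set.finite_Ico _ _)
    _ = L := by
        rw [show Set.Ico x (x + (L : ℤ)) = ↑(Finset.Ico x (x + L)) from
          (Finset.coe_Ico _ _).symm, Set.ncard_coe_finset, Int.card_Ico]
        omega

lemma stmt18_finite (A : Set ℤ) (a b : ℤ) : (A ∩ Set.Ico a b).Finite :=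
  (Set.finite_Ico a b).inter_of_right _

/-- Greedy covering lemma. -/
lemma stmt18_greedy (A : Set ℤ) (t : ℝ) (ht : 0 < t) (K : ℕ) (hK : 1 ≤ K)
    (H : ∀ x : ℤ, ∃ k : ℕ, 1 ≤ k ∧ k ≤ K ∧
      ((A ∩ Set.Ico x (x + k)).ncard : ℝ) < t * k) :
    ∀ L : ℕ, ∀ x : ℤ, ((A ∩ Set.Ico x (x + L)).ncard : ℝ) ≤ t * L + t * K := by
  intro L
  induction L using Nat.strong_induction_on with
  | _ L ih =>
    intro x
    obtain ⟨k, hk1, hkK, hcount⟩ := H x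
    by_cases hLk : L ≤ k
    · have hsub : A ∩ Set.Ico x (x + L) ⊆ A ∩ Set.Ico x (x + k) := by
        apply Set.inter_subset_inter_right
        apply Set.Ico_subset_Ico_right
        omega
      have h1 : ((A ∩ Set.Ico x (x + L)).ncard : ℝ)
          ≤ ((A ∩ Set.Ico x (x + k)).ncard : ℝ) := by
        exact_mod_cast Set.ncard_le_ncard hsub (stmt18_finite A _ _)
      have hkK' : (k : ℝ) ≤ K := by exact_mod_cast hkK
      nlinarith [Nat.cast_nonneg (α := ℝ) L]
    · push_neg at hLk
      have hsub : A ∩ Set.Ico x (x + L) ⊆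
          (A ∩ Set.Ico x (x + k)) ∪ (A ∩ Set.Ico (x + k) (x + L)) := by
        rw [← Set.inter_union_distrib_left]
        apply Set.inter_subset_inter_right
        rw [Set.Ico_union_Ico_eq_Ico (by omega) (by omega : (x : ℤ) + k ≤ x + L)]
      have hcard : ((A ∩ Set.Ico x (x + L)).ncard : ℝ)
          ≤ ((A ∩ Set.Ico x (x + k)).ncard : ℝ)
            + ((A ∩ Set.Ico (x + k) (x + L)).ncard : ℝ) := by
        have := Set.ncard_union_le (A ∩ Set.Ico x (x + (k : ℤ)))
          (A ∩ Set.Ico (x + k) (x + L))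
        have h2 := Set.ncard_le_ncard hsub
          ((stmt18_finite A _ _).union (stmt18_finite A _ _))
        exact_mod_cast le_trans h2 this
      have hrec := ih (L - k) (by omega) (x + k)
      have heq : x + k + ((L - k : ℕ) : ℤ) = x + L := by
        push_cast [Nat.cast_sub hLk.le]; ring
      rw [heq] at hrec
      have hcast : ((L - k : ℕ) : ℝ) = (L : ℝ) - k := by
        push_cast [Nat.cast_sub hLk.le]; ring
      rw [hcast] at hrec
      nlinarith

/-- Finitary density lemma: if `A ⊆ ℤ` has upper Banach density `d` and
`0 < α ≤ d`, then for every `n ≥ 1` and `ε > 0` there are `m ∈ ℤ` and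
`x ∈ [m+1, m+n]` such that `|A ∩ [x, x+k)| / k ≥ α/2 − ε` for all
`1 ≤ k ≤ √n`. -/
theorem stmt18 (A : Set ℤ) (d α : ℝ)
    (hBD : Filter.Tendsto
      (fun n : ℕ => ⨆ m : ℤ, ((A ∩ Set.Icc (m + 1) (m + n)).ncard : ℝ) / n)
      Filter.atTop (nhds d))
    (hα : 0 < α) (hαd : α ≤ d) :
    ∀ n : ℕ, 1 ≤ n → ∀ ε : ℝ, 0 < ε →
      ∃ m : ℤ, ∃ x ∈ Set.Icc (m + 1) (m + n),
        ∀ k : ℕ, 1 ≤ k → (k : ℝ) ≤ Real.sqrt n →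
          α / 2 - ε ≤ ((A ∩ Set.Ico x (x + k)).ncard : ℝ) / k := by
  intro n hn ε hε
  set t : ℝ := α / 2 - ε with ht_def
  have hmem : (0 : ℤ) + 1 ∈ Set.Icc ((0 : ℤ) + 1) (0 + n) := by
    constructor <;> omega
  by_cases htpos : t ≤ 0
  · exact ⟨0, 0 + 1, hmem, fun k hk _ => le_trans htpos (by positivity)⟩
  push_neg at htpos
  by_contra hcon
  push_neg at hcon
  -- For every x there is a short interval of low density
  have H : ∀ x : ℤ, ∃ k : ℕ, 1 ≤ k ∧ k ≤ n ∧
      ((A ∩ Set.Ico x (x + k)).ncard : ℝ) < t * k := by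
    intro x
    have hx : x ∈ Set.Icc ((x - 1) + 1) ((x - 1) + n) := by
      constructor <;> omega
    obtain ⟨k, hk1, hksqrt, hklt⟩ := hcon (x - 1) x hx
    refine ⟨k, hk1, ?_, ?_⟩
    · have hs : Real.sqrt n ≤ n := by
        rw [Real.sqrt_le_iff]
        constructor
        · positivity
        · have : (1 : ℝ) ≤ n := by exact_mod_cast hn
          nlinarith
      have : (k : ℝ) ≤ n := le_trans hksqrt hs
      exact_mod_cast this
    · have hkpos : (0 : ℝ) < k := by exact_mod_cast hk1
      rw [div_lt_iff₀ hkpos] at hklt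
      linarith
  have key := stmt18_greedy A t htpos n hn H
  -- Choose a large N
  have hev1 : ∀ᶠ N : ℕ in Filter.atTop,
      d - ε / 2 < ⨆ m : ℤ, ((A ∩ Set.Icc (m + 1) (m + N)).ncard : ℝ) / N :=
    hBD.eventually (eventually_gt_nhds (by linarith))
  have hev2 : ∀ᶠ N : ℕ in Filter.atTop, n ≤ N := Filter.eventually_ge_atTop n
  obtain ⟨N, hsup, hnN⟩ := (hev1.and hev2).exists
  have hN1 : 1 ≤ N := le_trans hn hnN
  have hNpos : (0 : ℝ) < N := by exact_mod_cast hN1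
  -- Extract m with large density
  have hbdd : BddAbove (Set.range fun m : ℤ =>
      ((A ∩ Set.Icc (m + 1) (m + N)).ncard : ℝ) / N) := by
    refine ⟨1, fun y hy => ?_⟩
    obtain ⟨m, rfl⟩ := hy
    dsimp only
    have hIco : Set.Icc (m + 1) (m + (N : ℤ)) = Set.Ico (m + 1) ((m + 1) + N) := by
      ext z; simp only [Set.mem_Icc, Set.mem_Ico]; omega
    rw [hIco]
    have := stmt18_card_le A (m + 1) N
    rw [div_le_one hNpos]
    exact_mod_cast this
  rw [lt_ciSup_iff hbdd] at hsup
  obtain ⟨m, hm⟩ := hsup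
  have hIco : Set.Icc (m + 1) (m + (N : ℤ)) = Set.Ico (m + 1) ((m + 1) + N) := by
    ext z; simp only [Set.mem_Icc, Set.mem_Ico]; omega
  rw [lt_div_iff₀ hNpos, hIco] at hm
  have hkey := key N (m + 1)
  have hnN' : (n : ℝ) ≤ N := by exact_mod_cast hnN
  have hεd : α - ε / 2 ≤ d - ε / 2 := by linarith
  -- hm : (d - ε/2) * N < count ; hkey : count ≤ t*N + t*n
  have h1 : t * n ≤ t * N := mul_le_mul_of_nonneg_left hnN' htpos.le
  have h2 : (α - ε / 2) * N ≤ (d - ε / 2) * N :=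
    mul_le_mul_of_nonneg_right hεd hNpos.le
  have h3 : 0 < ε * N := mul_pos hε hNpos
  have ht2 : 2 * t * N = (α - 2 * ε) * N := by rw [ht_def]; ring
  nlinarith [hm, hkey, h1, h2, h3, ht2]
end
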